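/- arXiv:2408.13276 — 4 statements merged into one kernel-verified Lean document; each statement's English description precedes it below -/
import Mathlib

section
/- Let U ∈ R^{d×r} and V ∈ R^{d×r} be matrices with rank(U) = min{r, d}. Then dist²(U,V) := min over orthogonal R ∈ R^{r×r} of ‖UR − V‖_F² satisfies dist²(U,V) ≤ ‖UU^T − VV^T‖_F² / (2(√2 − 1) σ_min(U)²), where σ_min(U) is the smallest nonzero singular value of U. -/
open scoped BigOperators
open Matrix

noncomputable def frobNorm {d₁ d₂ : ℕ} (A : Matrix (Fin d₁) (Fin d₂) ℝ) : ℝ :=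
  Real.sqrt (∑ i, ∑ j, A i j ^ 2)

noncomputable def vecNorm {m : ℕ} (y : Fin m → ℝ) : ℝ :=
  Real.sqrt (∑ i, y i ^ 2)

noncomputable def specNorm {d₁ d₂ : ℕ} (A : Matrix (Fin d₁) (Fin d₂) ℝ) : ℝ :=
  ‖LinearMap.toContinuousLinearMap (Matrix.toEuclideanLin A)‖

noncomputable def tinner {d : ℕ} (A B : Matrix (Fin d) (Fin d) ℝ) : ℝ :=
  (A * Bᵀ).trace

noncomputable def sigmaMin {d₁ d₂ : ℕ} (A : Matrix (Fin d₁) (Fin d₂) ℝ) : ℝ :=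
  sInf {s : ℝ | 0 < s ∧ ∃ i, s ^ 2 = (show (Aᵀ * A).IsHermitian by
    simpa using Matrix.isHermitian_conjTranspose_mul_self A).eigenvalues i}

noncomputable def projPerp {d : ℕ} (w : Fin d → ℝ) (Z : Matrix (Fin d) (Fin d) ℝ) :
    Matrix (Fin d) (Fin d) ℝ :=
  Z - tinner (Matrix.vecMulVec w w) Z • Matrix.vecMulVec w w

/-!
With `M = Vᵀ U` and `P = (Mᵀ M)^(1/2)` we have `‖M x‖ = ‖P x‖`, so `Q₀ M = P` for an orthogonal
`Q₀`. The range of `P = Pᵀ = Uᵀ (V Q₀ᵀ)` lies both in the row space of `U` and in the image under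
`Q₀` of the row space of `V`; as `rank V ≤ rank U`, an orthogonal `Q` fixing the range of `P` moves
the latter into the former. For `R = Q Q₀` and `W = V Rᵀ` this gives `Wᵀ U = P ⪰ 0`, and the rows
of `W` lie in the row space of `U`.

For such `W`, with `Δ = W - U`, `S = Δᵀ Δ` and the symmetric matrix `C = Δᵀ U`,
`‖W Wᵀ - U Uᵀ‖² = tr ((S + √2 C)²) + (4 - 2√2) tr (S Wᵀ U) + 2 (√2 - 1) ‖Δ Uᵀ‖²`,
where the first two terms are nonnegative, and `‖Δ Uᵀ‖² ≥ σ_min(U)² ‖Δ‖²` because the rows of `Δ`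
lie in the row space of `U`, spanned by the eigenvectors of `Uᵀ U` with nonzero eigenvalue.
-/

open InnerProductSpace Module

section LinearIsometry

variable {𝕜 E : Type*} [RCLike 𝕜] [NormedAddCommGroup E] [InnerProductSpace 𝕜 E]
  [FiniteDimensional 𝕜 E]

theorem exists_linearIsometryEquiv_comp_eq {F : Type*} [AddCommGroup F] [Module 𝕜 F]
    (A B : F →ₗ[𝕜] E) (h : ∀ x, ‖A x‖ = ‖B x‖) : ∃ T : E ≃ₗᵢ[𝕜] E, ∀ x, T (A x) = B x := by
  have hker : LinearMap.ker A ≤ LinearMap.ker B := fun x hx => by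
    rw [LinearMap.mem_ker, ← norm_eq_zero, ← h, LinearMap.mem_ker.mp hx, norm_zero]
  let L := (LinearMap.ker A).liftQ B hker ∘ₗ A.quotKerEquivRange.symm.toLinearMap
  have hL : ∀ x, L ⟨A x, LinearMap.mem_range_self A x⟩ = B x := fun x => by
    simp [L, LinearMap.quotKerEquivRange_symm_apply_image]
  let φ : LinearMap.range A →ₗᵢ[𝕜] E :=
    { toLinearMap := L
      norm_map' := by
        rintro ⟨_, x, rfl⟩
        rw [hL, ← h]
        rfl }
  exact ⟨φ.extend.toLinearIsometryEquiv rfl, fun x => (φ.extend_apply ⟨A x, _⟩).trans (hL x)⟩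

theorem exists_linearIsometry_of_finrank_le {F : Type*} [NormedAddCommGroup F]
    [InnerProductSpace 𝕜 F] [FiniteDimensional 𝕜 F] (h : finrank 𝕜 E ≤ finrank 𝕜 F) :
    Nonempty (E →ₗᵢ[𝕜] F) := by
  let bE := stdOrthonormalBasis 𝕜 E
  let bF := stdOrthonormalBasis 𝕜 F
  let f := bE.toBasis.constr 𝕜 fun i => bF (Fin.castLE h i)
  refine ⟨f.isometryOfOrthonormal (v := bE.toBasis) (by simp [bE.orthonormal]) ?_⟩
  have : f ∘ bE.toBasis = fun i => bF (Fin.castLE h i) := funext fun i => by simp [f]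
  rw [this]
  exact bF.orthonormal.comp _ (Fin.castLE_injective h)

theorem exists_linearIsometryEquiv_fixing_map_le {K X Y : Submodule 𝕜 E} (hKX : K ≤ X)
    (hKY : K ≤ Y) (hXY : finrank 𝕜 X ≤ finrank 𝕜 Y) :
    ∃ S : E ≃ₗᵢ[𝕜] E, (∀ k ∈ K, S k = k) ∧ X.map S.toLinearMap ≤ Y := by
  have hX := Submodule.finrank_add_inf_finrank_orthogonal hKX
  have hY := Submodule.finrank_add_inf_finrank_orthogonal hKY
  obtain ⟨g⟩ := exists_linearIsometry_of_finrank_le (𝕜 := 𝕜)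
    (E := ↥(Kᗮ ⊓ X)) (F := ↥(Kᗮ ⊓ Y)) (by omega)
  -- `X = K ⊔ (Kᗮ ⊓ X)`: fix `K` and embed `Kᗮ ⊓ X` isometrically into `Kᗮ ⊓ Y`.
  let A := K.subtype.coprod (Kᗮ ⊓ X).subtype
  let B := K.subtype.coprod ((Kᗮ ⊓ Y).subtype ∘ₗ g.toLinearMap)
  have hAB : ∀ p, ‖A p‖ = ‖B p‖ := by
    rintro ⟨k, z⟩
    have hz : ⟪(k : E), (z : E)⟫_𝕜 = 0 := Submodule.inner_right_of_mem_orthogonal k.2 z.2.1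
    have hgz : ⟪(k : E), (g z : E)⟫_𝕜 = 0 :=
      Submodule.inner_right_of_mem_orthogonal k.2 (g z).2.1
    rw [← mul_self_inj (norm_nonneg _) (norm_nonneg _)]
    simp only [A, B, LinearMap.coprod_apply, Submodule.subtype_apply, LinearMap.comp_apply,
      LinearIsometry.coe_toLinearMap]
    rw [norm_add_sq_eq_norm_sq_add_norm_sq_of_inner_eq_zero _ _ hz,
      norm_add_sq_eq_norm_sq_add_norm_sq_of_inner_eq_zero _ _ hgz, Submodule.norm_coe (g z),
      g.norm_map]
    rfl
  obtain ⟨S, hS⟩ := exists_linearIsometryEquiv_comp_eq A B hAB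
  refine ⟨S, fun k hk => by simpa [A, B] using hS (⟨k, hk⟩, 0), ?_⟩
  rintro _ ⟨x, hx, rfl⟩
  rw [← Submodule.sup_orthogonal_inf_of_hasOrthogonalProjection hKX] at hx
  obtain ⟨k, hk, z, hz, rfl⟩ := Submodule.mem_sup.mp hx
  change S (A (⟨k, hk⟩, ⟨z, hz⟩)) ∈ Y
  rw [hS]
  exact Y.add_mem (hKY hk) (g _).2.2

end LinearIsometry

namespace Matrix

theorem trace_mul_transpose_mul_mul_transpose {m n R : Type*} [CommSemiring R] [Fintype m]
    [Fintype n] (X Y Z T : Matrix m n R) :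
    (X * Yᵀ * (Z * Tᵀ)).trace = (Tᵀ * X * (Yᵀ * Z)).trace := by
  rw [← Matrix.mul_assoc, trace_mul_cycle]
  simp only [Matrix.mul_assoc]

variable {m n : Type*} [Fintype n] [DecidableEq n]

theorem toEuclideanLin_transpose [Fintype m] [DecidableEq m] (A : Matrix m n ℝ) :
    toEuclideanLin Aᵀ = (toEuclideanLin A).adjoint := by
  rw [← toEuclideanLin_conjTranspose_eq_adjoint, conjTranspose_eq_transpose_of_trivial]

theorem norm_toEuclideanLin_sq [Fintype m] [DecidableEq m] (A : Matrix m n ℝ)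
    (x : EuclideanSpace ℝ n) : ‖toEuclideanLin A x‖ ^ 2 = ⟪x, toEuclideanLin (Aᵀ * A) x⟫_ℝ := by
  rw [toLpLin_mul_same, toEuclideanLin_transpose, LinearMap.comp_apply,
    LinearMap.adjoint_inner_right, real_inner_self_eq_norm_sq]

theorem norm_toEuclideanLin_eq_of_transpose_mul_self_eq [Fintype m] [DecidableEq m]
    {A B : Matrix m n ℝ} (h : Aᵀ * A = Bᵀ * B) (x : EuclideanSpace ℝ n) :
    ‖toEuclideanLin A x‖ = ‖toEuclideanLin B x‖ := by
  rw [← sq_eq_sq₀ (norm_nonneg _) (norm_nonneg _), norm_toEuclideanLin_sq,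
    norm_toEuclideanLin_sq, h]

theorem exists_mem_orthogonalGroup_toEuclideanLin_eq
    (T : EuclideanSpace ℝ n ≃ₗᵢ[ℝ] EuclideanSpace ℝ n) :
    ∃ R ∈ orthogonalGroup n ℝ, toEuclideanLin R = T.toLinearMap := by
  let b := EuclideanSpace.basisFun n ℝ
  refine ⟨LinearMap.toMatrix b.toBasis b.toBasis T.toLinearMap,
    T.toMatrix_mem_unitaryGroup b b, ?_⟩
  rw [toEuclideanLin_eq_toLin_orthonormal, toLin_toMatrix]

theorem range_toEuclideanLin_mul_le {o : Type*} [Fintype o] [DecidableEq o]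
    (A : Matrix m n ℝ) (B : Matrix n o ℝ) :
    LinearMap.range (toEuclideanLin (A * B)) ≤ LinearMap.range (toEuclideanLin A) := by
  rw [toLpLin_mul_same]
  exact LinearMap.range_comp_le_range _ _

theorem rank_eq_finrank_range_toEuclideanLin [Fintype m] (A : Matrix m n ℝ) :
    A.rank = finrank ℝ (LinearMap.range (toEuclideanLin A)) := by
  rw [toEuclideanLin_eq_toLin_orthonormal]
  exact A.rank_eq_finrank_range_toLin _ _

theorem exists_mem_orthogonalGroup_mul_eq_of_transpose_mul_self_eq {k : Type*} [Fintype k]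
    [DecidableEq k] {A B : Matrix n k ℝ} (h : Aᵀ * A = Bᵀ * B) :
    ∃ Q ∈ orthogonalGroup n ℝ, Q * A = B := by
  obtain ⟨T, hT⟩ := exists_linearIsometryEquiv_comp_eq _ _
    (norm_toEuclideanLin_eq_of_transpose_mul_self_eq h)
  obtain ⟨Q, hQ, hQT⟩ := exists_mem_orthogonalGroup_toEuclideanLin_eq T
  refine ⟨Q, hQ, toEuclideanLin.injective ?_⟩
  ext1 x
  rw [toLpLin_mul_same, LinearMap.comp_apply, hQT]
  exact hT x

open scoped MatrixOrder in
theorem exists_mem_orthogonalGroup_posSemidef_range_le [Fintype m] [DecidableEq m]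
    (U V : Matrix m n ℝ) (h : V.rank ≤ U.rank) :
    ∃ R ∈ orthogonalGroup n ℝ, (R * Vᵀ * U).PosSemidef ∧
      LinearMap.range (toEuclideanLin (R * Vᵀ)) ≤ LinearMap.range (toEuclideanLin Uᵀ) := by
  let M := Vᵀ * U
  set P := CFC.sqrt (Mᵀ * M)
  have hMM : 0 ≤ Mᵀ * M := by simpa using (posSemidef_conjTranspose_mul_self M).nonneg
  have hP : P.PosSemidef := (CFC.sqrt_nonneg _).posSemidef
  have hPt : Pᵀ = P := by simpa using hP.isHermitian.eq
  obtain ⟨Q₀, hQ₀, hQ₀M⟩ := exists_mem_orthogonalGroup_mul_eq_of_transpose_mul_self_eq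
    (A := M) (B := P) (by rw [hPt, CFC.sqrt_mul_sqrt_self _ hMM])
  have hPU : LinearMap.range (toEuclideanLin P) ≤ LinearMap.range (toEuclideanLin Uᵀ) := by
    rw [← hPt, ← hQ₀M, transpose_mul, transpose_mul, transpose_transpose, Matrix.mul_assoc]
    exact range_toEuclideanLin_mul_le _ _
  have hPX : LinearMap.range (toEuclideanLin P) ≤ LinearMap.range (toEuclideanLin (Q₀ * Vᵀ)) := by
    rw [← hQ₀M, ← Matrix.mul_assoc]
    exact range_toEuclideanLin_mul_le _ _
  have hXY : finrank ℝ (LinearMap.range (toEuclideanLin (Q₀ * Vᵀ))) ≤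
      finrank ℝ (LinearMap.range (toEuclideanLin Uᵀ)) := by
    rw [← rank_eq_finrank_range_toEuclideanLin, ← rank_eq_finrank_range_toEuclideanLin,
      rank_transpose]
    exact (rank_mul_le_right _ _).trans (Vᵀ.rank_transpose ▸ h)
  obtain ⟨S, hSP, hSY⟩ := exists_linearIsometryEquiv_fixing_map_le hPX hPU hXY
  obtain ⟨Q, hQ, hQS⟩ := exists_mem_orthogonalGroup_toEuclideanLin_eq S
  have hQP : Q * P = P := toEuclideanLin.injective <| by
    ext1 x
    rw [toLpLin_mul_same, LinearMap.comp_apply, hQS]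
    exact hSP _ ⟨x, rfl⟩
  refine ⟨Q * Q₀, mul_mem hQ hQ₀, ?_, ?_⟩
  · have hQQ₀ : Q * Q₀ * Vᵀ * U = Q * (Q₀ * M) := by simp only [M, Matrix.mul_assoc]
    rw [hQQ₀, hQ₀M, hQP]
    exact hP
  · rw [Matrix.mul_assoc, toLpLin_mul_same, LinearMap.range_comp, hQS]
    exact hSY

end Matrix

section FrobeniusNorm

variable {d r : ℕ}

theorem frobNorm_eq_sqrt_trace {d₁ d₂ : ℕ} (B : Matrix (Fin d₁) (Fin d₂) ℝ) :
    frobNorm B = √(B * Bᵀ).trace := by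
  simp [frobNorm, trace, mul_apply, sq]

theorem frobNorm_sq_eq_trace {d₁ d₂ : ℕ} (B : Matrix (Fin d₁) (Fin d₂) ℝ) :
    frobNorm B ^ 2 = (B * Bᵀ).trace := by
  rw [frobNorm_eq_sqrt_trace, Real.sq_sqrt]
  simpa using (posSemidef_self_mul_conjTranspose B).trace_nonneg

theorem frobNorm_neg {d₁ d₂ : ℕ} (B : Matrix (Fin d₁) (Fin d₂) ℝ) : frobNorm (-B) = frobNorm B := by
  simp [frobNorm]

theorem frobNorm_mul_of_mem_orthogonalGroup {d₁ d₂ : ℕ} (B : Matrix (Fin d₁) (Fin d₂) ℝ)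
    {Q : Matrix (Fin d₂) (Fin d₂) ℝ} (hQ : Q ∈ orthogonalGroup (Fin d₂) ℝ) :
    frobNorm (B * Q) = frobNorm B := by
  rw [frobNorm_eq_sqrt_trace, frobNorm_eq_sqrt_trace, transpose_mul, Matrix.mul_assoc,
    ← Matrix.mul_assoc Q, (mem_orthogonalGroup_iff _ _).mp hQ, Matrix.one_mul]

theorem frobNorm_sq_eq_sum_norm_sq {d₁ d₂ : ℕ} (B : Matrix (Fin d₁) (Fin d₂) ℝ) :
    frobNorm B ^ 2 = ∑ i, ‖toEuclideanLin Bᵀ (EuclideanSpace.single i 1)‖ ^ 2 := by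
  rw [frobNorm, Real.sq_sqrt (by positivity)]
  refine Finset.sum_congr rfl fun i _ => ?_
  simp [EuclideanSpace.norm_sq_eq, toLpLin_apply]

theorem frobNorm_mul_transpose_sub_mul_transpose_sq (U W : Matrix (Fin d) (Fin r) ℝ) :
    frobNorm (W * Wᵀ - U * Uᵀ) ^ 2 = (Wᵀ * W * (Wᵀ * W)).trace + (Uᵀ * U * (Uᵀ * U)).trace
      - 2 * ((Wᵀ * U)ᵀ * (Wᵀ * U)).trace := by
  rw [frobNorm_sq_eq_trace]
  simp only [transpose_sub, transpose_mul, transpose_transpose, Matrix.sub_mul, Matrix.mul_sub,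
    trace_sub, trace_mul_transpose_mul_mul_transpose]
  rw [trace_mul_comm (Wᵀ * U)]
  ring

theorem frobNorm_mul_transpose_sq (Δ U : Matrix (Fin d) (Fin r) ℝ) :
    frobNorm (Δ * Uᵀ) ^ 2 = (Δᵀ * Δ * (Uᵀ * U)).trace := by
  rw [frobNorm_sq_eq_trace, transpose_mul, transpose_transpose,
    ← trace_mul_transpose_mul_mul_transpose]

theorem two_mul_sqrt_two_sub_one_mul_frobNorm_sq_le (U W : Matrix (Fin d) (Fin r) ℝ)
    (hWU : (Wᵀ * U).PosSemidef) :
    2 * (√2 - 1) * frobNorm ((W - U) * Uᵀ) ^ 2 ≤ frobNorm (W * Wᵀ - U * Uᵀ) ^ 2 := by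
  set K := Wᵀ * W
  set G := Uᵀ * U
  set A := Wᵀ * U
  have hA : Aᵀ = A := by simpa using hWU.isHermitian.eq
  set S := K + G - A - A
  have hS : (W - U)ᵀ * (W - U) = S := by
    rw [transpose_sub, Matrix.sub_mul, Matrix.mul_sub, Matrix.mul_sub,
      show Uᵀ * W = A by rw [← hA, transpose_mul, transpose_transpose]]
    simp only [S, K, G, A]
    abel
  set X := S + √2 • (A - G)
  have hXt : Xᵀ = X := by simp [X, S, K, G, hA, transpose_mul]
  have hSA : 0 ≤ (S * A).trace := by
    rw [← hS, Matrix.mul_assoc, trace_mul_comm, Matrix.mul_assoc, ← Matrix.mul_assoc]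
    simpa using (hWU.mul_mul_conjTranspose_same (W - U)).trace_nonneg
  have hXX : 0 ≤ (X * X).trace := by
    have := (posSemidef_conjTranspose_mul_self X).trace_nonneg
    rwa [conjTranspose_eq_transpose_of_trivial, hXt] at this
  have key : (K * K).trace + (G * G).trace - 2 * (A * A).trace - 2 * (√2 - 1) * (S * G).trace
      = (X * X).trace + (4 - 2 * √2) * (S * A).trace := by
    have hGK : (G * K).trace = (K * G).trace := trace_mul_comm _ _
    have hAK : (A * K).trace = (K * A).trace := trace_mul_comm _ _
    have hAG : (A * G).trace = (G * A).trace := trace_mul_comm _ _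
    simp only [S, X, Matrix.add_mul, Matrix.mul_add, Matrix.sub_mul, Matrix.mul_sub,
      Matrix.smul_mul, Matrix.mul_smul, trace_add, trace_sub, trace_smul, smul_eq_mul,
      hGK, hAK, hAG]
    linear_combination ((G * A).trace * 2 - (A * A).trace - (G * G).trace) *
      Real.mul_self_sqrt zero_le_two
  have h4 : 0 ≤ 4 - 2 * √2 := by nlinarith [Real.sqrt_nonneg 2, Real.sq_sqrt zero_le_two]
  rw [frobNorm_mul_transpose_sq, hS, frobNorm_mul_transpose_sub_mul_transpose_sq, hA]
  linarith [mul_nonneg h4 hSA]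

end FrobeniusNorm

section SigmaMin

theorem Matrix.isHermitian_transpose_mul_self {m n : Type*} [Fintype m] (A : Matrix m n ℝ) :
    (Aᵀ * A).IsHermitian := by
  simpa using isHermitian_conjTranspose_mul_self A

variable {d r : ℕ}

theorem sigmaMin_nonneg (A : Matrix (Fin d) (Fin r) ℝ) : 0 ≤ sigmaMin A :=
  Real.sInf_nonneg fun _ hs => hs.1.le

theorem sq_sigmaMin_le_eigenvalues (A : Matrix (Fin d) (Fin r) ℝ) {i : Fin r}
    (hi : (isHermitian_transpose_mul_self A).eigenvalues i ≠ 0) :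
    sigmaMin A ^ 2 ≤ (isHermitian_transpose_mul_self A).eigenvalues i := by
  have hev := (posSemidef_conjTranspose_mul_self A).eigenvalues_nonneg i
  have hmem : √((isHermitian_transpose_mul_self A).eigenvalues i) ∈
      {s : ℝ | 0 < s ∧ ∃ j, s ^ 2 = (isHermitian_transpose_mul_self A).eigenvalues j} :=
    ⟨Real.sqrt_pos.mpr (hev.lt_of_ne' hi), i, Real.sq_sqrt hev⟩
  calc sigmaMin A ^ 2 ≤ √((isHermitian_transpose_mul_self A).eigenvalues i) ^ 2 := by
        gcongr
        · exact sigmaMin_nonneg A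
        · exact csInf_le ⟨0, fun _ hs => hs.1.le⟩ hmem
    _ = _ := Real.sq_sqrt hev

theorem sigmaMin_pos {A : Matrix (Fin d) (Fin r) ℝ} (hA : A ≠ 0) : 0 < sigmaMin A := by
  set S := {s : ℝ | 0 < s ∧ ∃ j, s ^ 2 = (isHermitian_transpose_mul_self A).eigenvalues j}
  have hS : S.Nonempty := by
    obtain ⟨i, hi⟩ : ∃ i, (isHermitian_transpose_mul_self A).eigenvalues i ≠ 0 := by
      by_contra! h
      refine hA (conjTranspose_mul_self_eq_zero.mp ?_)
      rw [conjTranspose_eq_transpose_of_trivial,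
        ← (isHermitian_transpose_mul_self A).eigenvalues_eq_zero_iff]
      exact funext h
    have hev := (posSemidef_conjTranspose_mul_self A).eigenvalues_nonneg i
    exact ⟨_, Real.sqrt_pos.mpr (hev.lt_of_ne' hi), i, Real.sq_sqrt hev⟩
  have hfin : S.Finite := by
    refine (Set.finite_range fun j => √((isHermitian_transpose_mul_self A).eigenvalues j)).subset ?_
    rintro s ⟨hs, j, hj⟩
    exact ⟨j, by beta_reduce; rw [← hj, Real.sqrt_sq hs.le]⟩
  exact (hS.csInf_mem hfin).1

theorem sq_sigmaMin_mul_norm_sq_le (A : Matrix (Fin d) (Fin r) ℝ) {z : EuclideanSpace ℝ (Fin r)}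
    (hz : z ∈ LinearMap.range (toEuclideanLin Aᵀ)) :
    sigmaMin A ^ 2 * ‖z‖ ^ 2 ≤ ‖toEuclideanLin A z‖ ^ 2 := by
  obtain ⟨y, rfl⟩ := hz
  set hG := isHermitian_transpose_mul_self A
  set b := hG.eigenvectorBasis
  have hb : ∀ i, toEuclideanLin (Aᵀ * A) (b i) = hG.eigenvalues i • b i := fun i => by
    ext1
    simp [toLpLin_apply, b, hG.mulVec_eigenvectorBasis]
  have hsymm : (toEuclideanLin (Aᵀ * A)).IsSymmetric := isSymmetric_toEuclideanLin_iff.mpr hG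
  set z := toEuclideanLin Aᵀ y with hz
  have hquad : ‖toEuclideanLin A z‖ ^ 2 = ∑ i, hG.eigenvalues i * ⟪b i, z⟫_ℝ ^ 2 := by
    rw [norm_toEuclideanLin_sq, ← b.sum_inner_mul_inner]
    refine Finset.sum_congr rfl fun i _ => ?_
    rw [← hsymm, hb, real_inner_smul_left, real_inner_comm z]
    ring
  have hker : ∀ i, hG.eigenvalues i = 0 → ⟪b i, z⟫_ℝ = 0 := fun i hi => by
    have h0 : ‖toEuclideanLin A (b i)‖ ^ 2 = 0 := by
      rw [norm_toEuclideanLin_sq, hb, hi, zero_smul, inner_zero_right]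
    rw [sq_eq_zero_iff, norm_eq_zero] at h0
    rw [hz, toEuclideanLin_transpose, LinearMap.adjoint_inner_right, h0, inner_zero_left]
  rw [hquad, ← b.sum_sq_inner_right, Finset.mul_sum]
  refine Finset.sum_le_sum fun i _ => ?_
  by_cases hi : hG.eigenvalues i = 0
  · simp [hker i hi]
  · exact mul_le_mul_of_nonneg_right (sq_sigmaMin_le_eigenvalues A hi) (sq_nonneg _)

theorem sq_sigmaMin_mul_frobNorm_sq_le (A Δ : Matrix (Fin d) (Fin r) ℝ)
    (h : LinearMap.range (toEuclideanLin Δᵀ) ≤ LinearMap.range (toEuclideanLin Aᵀ)) :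
    sigmaMin A ^ 2 * frobNorm Δ ^ 2 ≤ frobNorm (Δ * Aᵀ) ^ 2 := by
  rw [frobNorm_sq_eq_sum_norm_sq, frobNorm_sq_eq_sum_norm_sq, Finset.mul_sum, transpose_mul,
    transpose_transpose, toLpLin_mul_same]
  exact Finset.sum_le_sum fun i _ => sq_sigmaMin_mul_norm_sq_le A (h ⟨_, rfl⟩)

theorem two_mul_sqrt_two_sub_one_mul_sq_sigmaMin_mul_frobNorm_sq_le
    (U W : Matrix (Fin d) (Fin r) ℝ) (hWU : (Wᵀ * U).PosSemidef)
    (hW : LinearMap.range (toEuclideanLin Wᵀ) ≤ LinearMap.range (toEuclideanLin Uᵀ)) :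
    2 * (√2 - 1) * sigmaMin U ^ 2 * frobNorm (W - U) ^ 2 ≤ frobNorm (W * Wᵀ - U * Uᵀ) ^ 2 := by
  have hΔ : LinearMap.range (toEuclideanLin (W - U)ᵀ) ≤ LinearMap.range (toEuclideanLin Uᵀ) := by
    rintro _ ⟨x, rfl⟩
    rw [transpose_sub, map_sub, LinearMap.sub_apply]
    exact sub_mem (hW ⟨x, rfl⟩) ⟨x, rfl⟩
  calc _ = 2 * (√2 - 1) * (sigmaMin U ^ 2 * frobNorm (W - U) ^ 2) := by ring
    _ ≤ 2 * (√2 - 1) * frobNorm ((W - U) * Uᵀ) ^ 2 := by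
      gcongr
      · linarith [Real.one_lt_sqrt_two]
      · exact sq_sigmaMin_mul_frobNorm_sq_le U _ hΔ
    _ ≤ _ := two_mul_sqrt_two_sub_one_mul_frobNorm_sq_le U W hWU

end SigmaMin

theorem statement5 {d r : ℕ} (U V : Matrix (Fin d) (Fin r) ℝ)
    (hU : U.rank = min r d) :
    sInf {x : ℝ | ∃ R : Matrix (Fin r) (Fin r) ℝ, Rᵀ * R = 1 ∧
        x = frobNorm (U * R - V) ^ 2}
      ≤ frobNorm (U * Uᵀ - V * Vᵀ) ^ 2 / (2 * (Real.sqrt 2 - 1) * sigmaMin U ^ 2) := by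
  obtain ⟨R, hR, hWU, hW⟩ := exists_mem_orthogonalGroup_posSemidef_range_le U V <| hU ▸
    le_min (by simpa using V.rank_le_card_width) (by simpa using V.rank_le_card_height)
  have hRR : Rᵀ * R = 1 := (mem_orthogonalGroup_iff' _ _).mp hR
  have hmem : frobNorm (U * R - V) ^ 2 ∈ {x : ℝ | ∃ R : Matrix (Fin r) (Fin r) ℝ, Rᵀ * R = 1 ∧
      x = frobNorm (U * R - V) ^ 2} := ⟨R, hRR, rfl⟩
  refine (csInf_le ⟨0, ?_⟩ hmem).trans ?_
  · rintro _ ⟨_, _, rfl⟩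
    exact sq_nonneg _
  rcases eq_or_ne U 0 with rfl | hU0
  -- Here the right side is `0` (a junk division by `sigmaMin 0 = 0`), but `d = 0` or `r = 0`.
  · rw [rank_zero, eq_comm, Nat.min_eq_zero_iff] at hU
    rcases hU with rfl | rfl <;> simp [frobNorm]
  set W := V * Rᵀ
  have hdist : U * R - V = -((W - U) * R) := by simp [W, Matrix.sub_mul, Matrix.mul_assoc, hRR]
  have hgram : U * Uᵀ - V * Vᵀ = -(W * Wᵀ - U * Uᵀ) := by
    simp [W, Matrix.mul_assoc, ← Matrix.mul_assoc Rᵀ, hRR]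
  have hc : 0 < 2 * (√2 - 1) * sigmaMin U ^ 2 :=
    mul_pos (by linarith [Real.one_lt_sqrt_two]) (pow_pos (sigmaMin_pos hU0) 2)
  rw [hdist, hgram, frobNorm_neg, frobNorm_neg, frobNorm_mul_of_mem_orthogonalGroup _ hR,
    le_div_iff₀ hc, mul_comm]
  exact two_mul_sqrt_two_sub_one_mul_sq_sigmaMin_mul_frobNorm_sq_le U W
    (by simpa [W] using hWU) (by simpa [W] using hW)
end

section
/- Let X_⋆ ∈ S^d be positive semidefinite of rank r with top-r eigenvector matrix V_⋆ ∈ R^{d×r} (orthonormal columns spanning the column space of X_⋆) and let V_⊥ ∈ R^{d×(d−r)} span the orthogonal complement. Let U ∈ R^{d×r} have left singular vector matrix V_U. Suppose ‖V_⊥^T V_U‖ ≤ 1/√2. Then for any matrix norm |||·||| satisfying |||XYZ||| ≤ ‖X‖ |||Y||| ‖Z‖, the inequalities hold: (a) |||V_⊥^T UU^T V_⊥||| ≤ 2 ‖V_⊥^T V_U‖ · |||V_⋆^T (UU^T − X_⋆) V_⊥|||, and (b) |||UU^T − X_⋆||| ≤ 2(1 + ‖V_⊥^T V_U‖) · |||V_⋆^T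 (UU^T − X_⋆)|||. -/
open scoped BigOperators
open Matrix

/-! Write `E = U Uᵀ - Xs` and split along `1 = Vs Vsᵀ + Vp Vpᵀ`. Since the range of `U Uᵀ` lies in
that of `VU`, `Vpᵀ U Uᵀ Vp = (Vpᵀ VU)(VUᵀ Vs)(Vsᵀ U Uᵀ Vp) + (Vpᵀ VU)(VUᵀ Vp)(Vpᵀ U Uᵀ Vp)`, and the
second term is at most `‖Vpᵀ VU‖² ≤ 1/2` times the left side, so it can be absorbed; as `Xs Vp = 0`
this is (a). For (b), the `Vs`-rows of `E` are `Vsᵀ E`, the remaining off-diagonal block is by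
symmetry a transpose of a piece of `Vsᵀ E`, and the `Vp`-`Vp` block is bounded by (a).

The transpose costs nothing: for invertible `W` the polar decomposition `W = S O` gives
`Wᵀ = Oᵀ W Oᵀ` with `O` orthogonal, and a generic perturbation `W + ε • 1` removes invertibility. -/

section SpecNorm

open scoped Matrix.Norms.L2Operator

variable {m n p : ℕ}

theorem specNorm_eq_l2_opNorm (A : Matrix (Fin m) (Fin n) ℝ) : specNorm A = ‖A‖ := rfl

theorem specNorm_nonneg (A : Matrix (Fin m) (Fin n) ℝ) : 0 ≤ specNorm A :=
  norm_nonneg _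

theorem specNorm_mul_le (A : Matrix (Fin m) (Fin n) ℝ) (B : Matrix (Fin n) (Fin p) ℝ) :
    specNorm (A * B) ≤ specNorm A * specNorm B :=
  l2_opNorm_mul A B

theorem specNorm_transpose (A : Matrix (Fin m) (Fin n) ℝ) : specNorm Aᵀ = specNorm A := by
  simp only [specNorm_eq_l2_opNorm, ← conjTranspose_eq_transpose_of_trivial,
    l2_opNorm_conjTranspose]

theorem specNorm_le_one_of_transpose_mul_self {A : Matrix (Fin m) (Fin n) ℝ} (hA : Aᵀ * A = 1) :
    specNorm A ≤ 1 := by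
  have hone := l2_opNorm_conjTranspose_mul_self (1 : Matrix (Fin n) (Fin n) ℝ)
  rw [conjTranspose_one, one_mul] at hone
  have hA' := l2_opNorm_conjTranspose_mul_self A
  rw [conjTranspose_eq_transpose_of_trivial, hA] at hA'
  have : ‖(1 : Matrix (Fin n) (Fin n) ℝ)‖ ≤ 1 := by
    nlinarith [norm_nonneg (1 : Matrix (Fin n) (Fin n) ℝ)]
  rw [specNorm_eq_l2_opNorm]
  nlinarith [norm_nonneg A]

theorem specNorm_one_le : specNorm (1 : Matrix (Fin n) (Fin n) ℝ) ≤ 1 :=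
  specNorm_le_one_of_transpose_mul_self (by rw [transpose_one, one_mul])

end SpecNorm

namespace Matrix

variable {R : Type*} [CommRing R] {n n₁ n₂ : Type*} [Fintype n] [Fintype n₁] [Fintype n₂]
  [DecidableEq n] [DecidableEq n₁] [DecidableEq n₂]

theorem mul_transpose_add_mul_transpose_eq_one (e : n ≃ n₁ ⊕ n₂)
    {A₁ : Matrix n n₁ R} {A₂ : Matrix n n₂ R}
    (h₁ : A₁ᵀ * A₁ = 1) (h₂ : A₂ᵀ * A₂ = 1) (h₁₂ : A₁ᵀ * A₂ = 0) :
    A₁ * A₁ᵀ + A₂ * A₂ᵀ = 1 := by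
  have h₂₁ : A₂ᵀ * A₁ = 0 := by
    rw [← transpose_transpose (A₂ᵀ * A₁), transpose_mul, transpose_transpose, h₁₂, transpose_zero]
  have h : fromRows A₁ᵀ A₂ᵀ * fromCols A₁ A₂ = 1 := by
    rw [fromRows_mul_fromCols, h₁, h₁₂, h₂₁, h₂, fromBlocks_one]
  rw [← fromCols_mul_fromRows]
  exact (fromCols_mul_fromRows_eq_one_comm e _ _ _ _).mpr h

open scoped MatrixOrder in
theorem exists_transpose_eq_mul_mul_of_isUnit_det {W : Matrix n n ℝ} (hW : IsUnit W.det) :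
    ∃ O : Matrix n n ℝ, O * Oᵀ = 1 ∧ Wᵀ = Oᵀ * W * Oᵀ := by
  -- polar decomposition `W = S * O` with `S = √(W Wᵀ)`, `O = S⁻¹ * W`
  have hWW : (W * Wᵀ).PosSemidef := by
    simpa only [conjTranspose_eq_transpose_of_trivial] using posSemidef_self_mul_conjTranspose W
  set S := CFC.sqrt (W * Wᵀ)
  have hSS : S * S = W * Wᵀ := CFC.sqrt_mul_sqrt_self _ hWW.nonneg
  have hST : Sᵀ = S := by
    simpa only [IsHermitian, conjTranspose_eq_transpose_of_trivial]
      using (CFC.sqrt_nonneg (W * Wᵀ)).posSemidef.1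
  have hS : IsUnit S.det := by
    have h := congrArg det hSS
    rw [det_mul, det_mul, det_transpose] at h
    exact (IsUnit.mul_iff.mp (h ▸ hW.mul hW)).1
  have hO : S⁻¹ * W * (S⁻¹ * W)ᵀ = 1 :=
    calc S⁻¹ * W * (S⁻¹ * W)ᵀ = S⁻¹ * (S * S) * S⁻¹ := by
          rw [transpose_mul, transpose_nonsing_inv, hST, hSS]; simp only [Matrix.mul_assoc]
      _ = 1 := by rw [← Matrix.mul_assoc, nonsing_inv_mul S hS, one_mul, mul_nonsing_inv S hS]
  have hSO : S * (S⁻¹ * W) = W := by rw [← Matrix.mul_assoc, mul_nonsing_inv S hS, one_mul]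
  refine ⟨S⁻¹ * W, hO, ?_⟩
  calc Wᵀ = (S⁻¹ * W)ᵀ * S * (S⁻¹ * W * (S⁻¹ * W)ᵀ) := by
        rw [hO, Matrix.mul_one]; nth_rewrite 1 [← hSO]; rw [transpose_mul, hST]
    _ = (S⁻¹ * W)ᵀ * (S * (S⁻¹ * W)) * (S⁻¹ * W)ᵀ := by simp only [Matrix.mul_assoc]
    _ = (S⁻¹ * W)ᵀ * W * (S⁻¹ * W)ᵀ := by rw [hSO]

theorem exists_pos_lt_isUnit_det_add_smul_one (Y : Matrix n n ℝ) {η : ℝ} (hη : 0 < η) :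
    ∃ ε, 0 < ε ∧ ε < η ∧ IsUnit (Y + ε • 1).det := by
  have hfin : {x : ℝ | (Y + x • 1).det = 0}.Finite := by
    refine (Polynomial.finite_setOfPred_isRoot (charpoly_monic (-Y)).ne_zero).subset
      fun x hx => ?_
    simp only [Set.mem_ofPred_eq, Polynomial.IsRoot, eval_charpoly] at hx ⊢
    rw [← hx, sub_neg_eq_add, add_comm, smul_one_eq_diagonal]
    rfl
  obtain ⟨ε, ⟨hε, hεη⟩, hdet⟩ := ((Set.Ioo_infinite hη).sdiff hfin).nonempty
  exact ⟨ε, hε, hεη, isUnit_iff_ne_zero.mpr hdet⟩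

end Matrix

section SubmultiplicativeNorm

variable (N : ∀ m n : ℕ, Matrix (Fin m) (Fin n) ℝ → ℝ)
  (hN0 : ∀ m n (X : Matrix (Fin m) (Fin n) ℝ), 0 ≤ N m n X)
  (hNadd : ∀ m n (X Y : Matrix (Fin m) (Fin n) ℝ), N m n (X + Y) ≤ N m n X + N m n Y)
  (hNsmul : ∀ m n (c : ℝ) (X : Matrix (Fin m) (Fin n) ℝ), N m n (c • X) = |c| * N m n X)
  (hNmul : ∀ m n p q (X : Matrix (Fin m) (Fin n) ℝ) (Y : Matrix (Fin n) (Fin p) ℝ)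
    (Z : Matrix (Fin p) (Fin q) ℝ), N m q (X * Y * Z) ≤ specNorm X * N n p Y * specNorm Z)
  {m n p q : ℕ}

include hN0 hNmul

theorem norm_mul_le_specNorm_mul (X : Matrix (Fin m) (Fin n) ℝ) (Y : Matrix (Fin n) (Fin p) ℝ) :
    N m p (X * Y) ≤ specNorm X * N n p Y := by
  have h := hNmul m n p p X Y 1
  rw [Matrix.mul_one] at h
  refine h.trans (mul_le_of_le_one_right ?_ specNorm_one_le)
  exact mul_nonneg (specNorm_nonneg X) (hN0 n p Y)

theorem norm_mul_mul_le_of_specNorm_le_one {X : Matrix (Fin m) (Fin n) ℝ}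
    (Y : Matrix (Fin n) (Fin p) ℝ) {Z : Matrix (Fin p) (Fin q) ℝ}
    (hX : specNorm X ≤ 1) (hZ : specNorm Z ≤ 1) : N m q (X * Y * Z) ≤ N n p Y := by
  refine (hNmul m n p q X Y Z).trans ?_
  calc specNorm X * N n p Y * specNorm Z ≤ 1 * N n p Y * 1 := by
        have hY := hN0 n p Y
        exact mul_le_mul (mul_le_mul_of_nonneg_right hX hY) hZ (specNorm_nonneg Z) (by positivity)
    _ = N n p Y := by ring

theorem norm_mul_le_of_specNorm_le_one_left {X : Matrix (Fin m) (Fin n) ℝ}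
    (Y : Matrix (Fin n) (Fin p) ℝ) (hX : specNorm X ≤ 1) : N m p (X * Y) ≤ N n p Y := by
  simpa only [Matrix.mul_one] using
    norm_mul_mul_le_of_specNorm_le_one N hN0 hNmul Y hX (specNorm_one_le (n := p))

theorem norm_mul_le_of_specNorm_le_one_right (Y : Matrix (Fin m) (Fin n) ℝ)
    {Z : Matrix (Fin n) (Fin p) ℝ} (hZ : specNorm Z ≤ 1) : N m p (Y * Z) ≤ N m n Y := by
  simpa only [Matrix.one_mul] using
    norm_mul_mul_le_of_specNorm_le_one N hN0 hNmul Y (specNorm_one_le (n := m)) hZ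

theorem norm_transpose_le_of_isUnit_det {W : Matrix (Fin n) (Fin n) ℝ} (hW : IsUnit W.det) :
    N n n Wᵀ ≤ N n n W := by
  obtain ⟨O, hO, hWO⟩ := Matrix.exists_transpose_eq_mul_mul_of_isUnit_det hW
  have hOT : specNorm Oᵀ ≤ 1 :=
    specNorm_le_one_of_transpose_mul_self (by rwa [Matrix.transpose_transpose])
  rw [hWO]
  exact norm_mul_mul_le_of_specNorm_le_one N hN0 hNmul W hOT hOT

omit hN0 hNmul in
include hNadd hNsmul in
theorem norm_add_smul_one_le (Y : Matrix (Fin n) (Fin n) ℝ) (c : ℝ) :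
    N n n (Y + c • 1) ≤ N n n Y + |c| * N n n 1 :=
  (hNadd n n Y (c • 1)).trans_eq (by rw [hNsmul])

include hNadd hNsmul in
theorem norm_transpose_le (Y : Matrix (Fin n) (Fin n) ℝ) : N n n Yᵀ ≤ N n n Y := by
  set c := N n n 1
  have hc : 0 ≤ c := hN0 n n 1
  refine le_of_forall_pos_le_add fun δ hδ => ?_
  obtain ⟨ε, hε, hεδ, hdet⟩ :=
    Matrix.exists_pos_lt_isUnit_det_add_smul_one Y (div_pos hδ (by linarith : 0 < 2 * c + 1))
  rw [lt_div_iff₀ (by linarith)] at hεδ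
  have hYT : Yᵀ = (Y + ε • 1)ᵀ + (-ε) • 1 := by
    rw [Matrix.transpose_add, Matrix.transpose_smul, Matrix.transpose_one]; module
  calc N n n Yᵀ ≤ N n n (Y + ε • 1)ᵀ + ε * c := by
        rw [hYT]
        simpa only [abs_neg, abs_of_pos hε] using
          norm_add_smul_one_le N hNadd hNsmul (Y + ε • 1)ᵀ (-ε)
    _ ≤ N n n (Y + ε • 1) + ε * c := by
        gcongr; exact norm_transpose_le_of_isUnit_det N hN0 hNmul hdet
    _ ≤ N n n Y + ε * c + ε * c := by
        gcongr; simpa only [abs_of_pos hε] using norm_add_smul_one_le N hNadd hNsmul Y ε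
    _ ≤ N n n Y + δ := by nlinarith

variable {d r k s : ℕ} {Vs : Matrix (Fin d) (Fin r) ℝ} {Vp : Matrix (Fin d) (Fin k) ℝ}

omit hNsmul in
include hNadd in
theorem norm_transpose_mul_le_of_sin_angle_le {VU : Matrix (Fin d) (Fin s) ℝ}
    {M : Matrix (Fin d) (Fin q) ℝ} (hone : Vs * Vsᵀ + Vp * Vpᵀ = 1) (hVs : Vsᵀ * Vs = 1)
    (hVU : VUᵀ * VU = 1) (hM : VU * VUᵀ * M = M)
    (hangle : specNorm (Vpᵀ * VU) ≤ 1 / Real.sqrt 2) :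
    N k q (Vpᵀ * M) ≤ 2 * specNorm (Vpᵀ * VU) * N r q (Vsᵀ * M) := by
  set ε := specNorm (Vpᵀ * VU)
  have hε : ε * ε ≤ 1 / 2 := by
    have h := mul_le_mul hangle hangle (specNorm_nonneg _) (by positivity)
    rwa [div_mul_div_comm, one_mul, Real.mul_self_sqrt zero_le_two] at h
  have hsplit : Vpᵀ * M
      = Vpᵀ * VU * (VUᵀ * Vs) * (Vsᵀ * M) + Vpᵀ * VU * (VUᵀ * Vp) * (Vpᵀ * M) := by
    calc Vpᵀ * M = Vpᵀ * VU * VUᵀ * ((Vs * Vsᵀ + Vp * Vpᵀ) * M) := by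
          rw [hone, Matrix.one_mul]
          nth_rewrite 1 [← hM]
          simp only [Matrix.mul_assoc]
      _ = _ := by simp only [Matrix.add_mul, Matrix.mul_add, Matrix.mul_assoc]
  have hfirst : specNorm (Vpᵀ * VU * (VUᵀ * Vs)) ≤ ε := by
    have hVUVs : specNorm (VUᵀ * Vs) ≤ 1 := by
      refine (specNorm_mul_le _ _).trans (mul_le_one₀ ?_ (specNorm_nonneg Vs) ?_)
      · rw [specNorm_transpose]; exact specNorm_le_one_of_transpose_mul_self hVU
      · exact specNorm_le_one_of_transpose_mul_self hVs
    exact (specNorm_mul_le _ _).trans (mul_le_of_le_one_right (specNorm_nonneg _) hVUVs)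
  have hsecond : specNorm (Vpᵀ * VU * (VUᵀ * Vp)) ≤ ε * ε := by
    refine (specNorm_mul_le _ _).trans_eq ?_
    rw [← specNorm_transpose (VUᵀ * Vp), Matrix.transpose_mul, Matrix.transpose_transpose]
  have hA := hN0 k q (Vpᵀ * M)
  have hbound : N k q (Vpᵀ * M) ≤ ε * N r q (Vsᵀ * M) + ε * ε * N k q (Vpᵀ * M) := by
    calc N k q (Vpᵀ * M)
        ≤ N k q (Vpᵀ * VU * (VUᵀ * Vs) * (Vsᵀ * M))
          + N k q (Vpᵀ * VU * (VUᵀ * Vp) * (Vpᵀ * M)) := by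
          conv_lhs => rw [hsplit]
          exact hNadd _ _ _ _
      _ ≤ ε * N r q (Vsᵀ * M) + ε * ε * N k q (Vpᵀ * M) := by
        gcongr
        · exact (norm_mul_le_specNorm_mul N hN0 hNmul _ _).trans
            (mul_le_mul_of_nonneg_right hfirst (hN0 _ _ _))
        · exact (norm_mul_le_specNorm_mul N hN0 hNmul _ _).trans
            (mul_le_mul_of_nonneg_right hsecond hA)
  nlinarith [mul_le_mul_of_nonneg_right hε hA]

include hNadd hNsmul in
theorem norm_le_of_transpose_eq_self {E : Matrix (Fin d) (Fin d) ℝ} (hE : Eᵀ = E)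
    (hone : Vs * Vsᵀ + Vp * Vpᵀ = 1) (hVs : Vsᵀ * Vs = 1) (hVp : Vpᵀ * Vp = 1) :
    N d d E ≤ 2 * N r d (Vsᵀ * E) + N k k (Vpᵀ * E * Vp) := by
  have hsVs := specNorm_le_one_of_transpose_mul_self hVs
  have hsVp := specNorm_le_one_of_transpose_mul_self hVp
  have hsVpT : specNorm Vpᵀ ≤ 1 := (specNorm_transpose Vp).trans_le hsVp
  have hsplit :
      E = Vs * (Vsᵀ * E) + ((Vs * (Vsᵀ * E * Vp) * Vpᵀ)ᵀ + Vp * (Vpᵀ * E * Vp) * Vpᵀ) := by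
    calc E = Vs * Vsᵀ * E + Vp * Vpᵀ * E * (Vs * Vsᵀ + Vp * Vpᵀ) := by
          rw [hone, Matrix.mul_one, ← Matrix.add_mul, hone, Matrix.one_mul]
      _ = _ := by
          simp only [Matrix.transpose_mul, Matrix.transpose_transpose, hE, Matrix.mul_add,
            Matrix.mul_assoc]
  have hcross : N r k (Vsᵀ * E * Vp) ≤ N r d (Vsᵀ * E) :=
    norm_mul_le_of_specNorm_le_one_right N hN0 hNmul _ hsVp
  calc N d d E ≤ N d d (Vs * (Vsᵀ * E))
        + (N d d (Vs * (Vsᵀ * E * Vp) * Vpᵀ)ᵀ + N d d (Vp * (Vpᵀ * E * Vp) * Vpᵀ)) := by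
        conv_lhs => rw [hsplit]
        exact (hNadd _ _ _ _).trans (add_le_add le_rfl (hNadd _ _ _ _))
    _ ≤ N r d (Vsᵀ * E) + (N r d (Vsᵀ * E) + N k k (Vpᵀ * E * Vp)) := by
        gcongr
        · exact norm_mul_le_of_specNorm_le_one_left N hN0 hNmul _ hsVs
        · exact ((norm_transpose_le N hN0 hNadd hNsmul hNmul _).trans
            (norm_mul_mul_le_of_specNorm_le_one N hN0 hNmul _ hsVs hsVpT)).trans hcross
        · exact norm_mul_mul_le_of_specNorm_le_one N hN0 hNmul _ hsVp hsVpT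
    _ = 2 * N r d (Vsᵀ * E) + N k k (Vpᵀ * E * Vp) := by ring

end SubmultiplicativeNorm

theorem statement6_general {d r : ℕ} (hrd : r ≤ d)
    (Xs : Matrix (Fin d) (Fin d) ℝ) (hXpsd : Xs.PosSemidef)
    (Vs : Matrix (Fin d) (Fin r) ℝ) (Vp : Matrix (Fin d) (Fin (d - r)) ℝ)
    (hVs : Vsᵀ * Vs = 1) (hVsX : Vs * Vsᵀ * Xs = Xs)
    (hVp : Vpᵀ * Vp = 1) (hVsVp : Vsᵀ * Vp = 0)
    (U VU : Matrix (Fin d) (Fin r) ℝ)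
    (hVU : VUᵀ * VU = 1) (hVUU : VU * VUᵀ * U = U)
    (hangle : specNorm (Vpᵀ * VU) ≤ 1 / Real.sqrt 2)
    (N : ∀ m n : ℕ, Matrix (Fin m) (Fin n) ℝ → ℝ)
    (hN0 : ∀ m n (X : Matrix (Fin m) (Fin n) ℝ), 0 ≤ N m n X)
    (hNadd : ∀ m n (X Y : Matrix (Fin m) (Fin n) ℝ), N m n (X + Y) ≤ N m n X + N m n Y)
    (hNsmul : ∀ m n (c : ℝ) (X : Matrix (Fin m) (Fin n) ℝ), N m n (c • X) = |c| * N m n X)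
    (hNmul : ∀ m n p q (X : Matrix (Fin m) (Fin n) ℝ) (Y : Matrix (Fin n) (Fin p) ℝ)
        (Z : Matrix (Fin p) (Fin q) ℝ),
      N m q (X * Y * Z) ≤ specNorm X * N n p Y * specNorm Z) :
    N (d - r) (d - r) (Vpᵀ * (U * Uᵀ) * Vp)
        ≤ 2 * specNorm (Vpᵀ * VU) * N r (d - r) (Vsᵀ * (U * Uᵀ - Xs) * Vp) ∧
      N d d (U * Uᵀ - Xs)
        ≤ 2 * (1 + specNorm (Vpᵀ * VU)) * N r d (Vsᵀ * (U * Uᵀ - Xs)) := by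
  set E := U * Uᵀ - Xs
  have hone : Vs * Vsᵀ + Vp * Vpᵀ = 1 :=
    Matrix.mul_transpose_add_mul_transpose_eq_one
      ((finCongr (by omega)).trans finSumFinEquiv.symm) hVs hVp hVsVp
  have hXT : Xsᵀ = Xs := by
    simpa only [Matrix.IsHermitian, Matrix.conjTranspose_eq_transpose_of_trivial] using hXpsd.1
  have hVpVs : Vpᵀ * Vs = 0 := by
    rw [← Matrix.transpose_transpose Vs, ← Matrix.transpose_mul, hVsVp, Matrix.transpose_zero]
  have hXVp : Xs * Vp = 0 :=
    calc Xs * Vp = (Vpᵀ * Vs * (Vsᵀ * Xs))ᵀ := by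
          rw [Matrix.mul_assoc, ← Matrix.mul_assoc Vs, hVsX, Matrix.transpose_mul,
            Matrix.transpose_transpose, hXT]
      _ = 0 := by rw [hVpVs, Matrix.zero_mul, Matrix.transpose_zero]
  have hEVp : E * Vp = U * Uᵀ * Vp := by rw [Matrix.sub_mul, hXVp, sub_zero]
  have hET : Eᵀ = E := by
    rw [Matrix.transpose_sub, Matrix.transpose_mul, Matrix.transpose_transpose, hXT]
  have hpart_a : N (d - r) (d - r) (Vpᵀ * E * Vp)
      ≤ 2 * specNorm (Vpᵀ * VU) * N r (d - r) (Vsᵀ * E * Vp) := by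
    simpa only [Matrix.mul_assoc] using
      norm_transpose_mul_le_of_sin_angle_le N hN0 hNadd hNmul (M := E * Vp) hone hVs hVU
        (by rw [hEVp, ← Matrix.mul_assoc, ← Matrix.mul_assoc, hVUU]) hangle
  have hcross : N r (d - r) (Vsᵀ * E * Vp) ≤ N r d (Vsᵀ * E) :=
    norm_mul_le_of_specNorm_le_one_right N hN0 hNmul _
      (specNorm_le_one_of_transpose_mul_self hVp)
  refine ⟨by simpa only [Matrix.mul_assoc, hEVp] using hpart_a, ?_⟩
  calc N d d E ≤ 2 * N r d (Vsᵀ * E) + N (d - r) (d - r) (Vpᵀ * E * Vp) :=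
        norm_le_of_transpose_eq_self N hN0 hNadd hNsmul hNmul hET hone hVs hVp
    _ ≤ 2 * N r d (Vsᵀ * E) + 2 * specNorm (Vpᵀ * VU) * N r d (Vsᵀ * E) := by
        gcongr
        have hε := specNorm_nonneg (Vpᵀ * VU)
        exact hpart_a.trans (mul_le_mul_of_nonneg_left hcross (by positivity))
    _ = 2 * (1 + specNorm (Vpᵀ * VU)) * N r d (Vsᵀ * E) := by ring

theorem statement6 {d r : ℕ} (hrd : r ≤ d)
    (Xs : Matrix (Fin d) (Fin d) ℝ) (hXpsd : Xs.PosSemidef) (hXrank : Xs.rank = r)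
    (Vs : Matrix (Fin d) (Fin r) ℝ) (Vp : Matrix (Fin d) (Fin (d - r)) ℝ)
    (hVs : Vsᵀ * Vs = 1) (hVsX : Vs * Vsᵀ * Xs = Xs)
    (hVp : Vpᵀ * Vp = 1) (hVsVp : Vsᵀ * Vp = 0)
    (U VU : Matrix (Fin d) (Fin r) ℝ)
    (hVU : VUᵀ * VU = 1) (hVUU : VU * VUᵀ * U = U)
    (hangle : specNorm (Vpᵀ * VU) ≤ 1 / Real.sqrt 2)
    (N : ∀ m n : ℕ, Matrix (Fin m) (Fin n) ℝ → ℝ)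
    (hN0 : ∀ m n (X : Matrix (Fin m) (Fin n) ℝ), 0 ≤ N m n X)
    (hNadd : ∀ m n (X Y : Matrix (Fin m) (Fin n) ℝ), N m n (X + Y) ≤ N m n X + N m n Y)
    (hNsmul : ∀ m n (c : ℝ) (X : Matrix (Fin m) (Fin n) ℝ), N m n (c • X) = |c| * N m n X)
    (hNmul : ∀ m n p q (X : Matrix (Fin m) (Fin n) ℝ) (Y : Matrix (Fin n) (Fin p) ℝ)
        (Z : Matrix (Fin p) (Fin q) ℝ),
      N m q (X * Y * Z) ≤ specNorm X * N n p Y * specNorm Z) :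
    N (d - r) (d - r) (Vpᵀ * (U * Uᵀ) * Vp)
        ≤ 2 * specNorm (Vpᵀ * VU) * N r (d - r) (Vsᵀ * (U * Uᵀ - Xs) * Vp) ∧
      N d d (U * Uᵀ - Xs)
        ≤ 2 * (1 + specNorm (Vpᵀ * VU)) * N r d (Vsᵀ * (U * Uᵀ - Xs)) :=
  statement6_general hrd Xs hXpsd Vs Vp hVs hVsX hVp hVsVp U VU hVU hVUU hangle N hN0 hNadd hNsmul
    hNmul
end

section
/- Consider gradient descent U_{t+1} = U_t + μ M_t U_t with M_t = (A*A)(X_⋆ − U_t U_t^T) = (X_⋆ − U_t U_t^T) + E_t, where E_t = (A*A − I)(X_⋆ − U_t U_t^T). Let |||·||| be a norm satisfying |||XYZ||| ≤ ‖X‖|||Y|||‖Z‖. Assume ‖V_⊥^T V_{U_t}‖ ≤ 1/2, ‖U_t‖ ≤ √(2‖X_⋆‖), ‖X_⋆ − U_t U_t^T‖ ≤ σ_min(X_⋆)/48, ‖E_t‖ ≤ σ_min(X_⋆)/48, and μ ≤ 1/(1024 κ ‖X_⋆‖). Then |||V_⋆^T (U_{t+1}U_{t+1}^T − X_⋆)|||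 ≤ (1 − (μ/8)σ_min(X_⋆)) |||V_⋆^T (X_⋆ − U_t U_t^T)||| + 5μ‖X_⋆‖ |||E_t V_{U_t}|||. -/
open scoped BigOperators
open Matrix

/-
Write `S = U Uᵀ`, `Δ = X⋆ - S`, `E = M - Δ`, `B = V⋆ᵀ X⋆ V⋆`. Using `V⋆ V⋆ᵀ X⋆ = X⋆` and
`V_U V_Uᵀ U = U`, the projected error after one step splits as `-(1 - μB) V⋆ᵀΔ (1 - μS)` plus
terms of size `μ² ‖X⋆‖² |||V⋆ᵀΔ|||`, `μ σ_min/48 |||V⋆ᵀΔ|||` and `μ ‖X⋆‖ |||E V_U|||`.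
The contraction comes from the first term: since `rank X⋆ = r`, every eigenvalue of `B` is a
nonzero eigenvalue of `X⋆`, so `σ_min ≤ B ≤ ‖X⋆‖` and `‖1 - μB‖ ≤ 1 - μ σ_min`, while
`‖1 - μS‖ ≤ 1` because `μ ‖S‖ ≤ 1`. One term contains `(E V_U)ᵀ`; the ideal property alone
controls it, since `Aᵀ = Y A Y` for a contraction `Y`.
-/

open scoped Matrix.Norms.L2Operator

namespace Matrix

lemma apply_eq_zero_of_transpose_mul_self_eq_diagonal {m n : Type*} [Fintype m] [DecidableEq n]
    {C : Matrix m n ℝ} {lam : n → ℝ} (hC : Cᵀ * C = diagonal lam) {j : n} (hj : lam j = 0)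
    (i : m) : C i j = 0 := by
  have hsum : ∑ k, C k j ^ 2 = 0 := by
    simpa [mul_apply, sq, hj] using congrFun (congrFun hC j) j
  exact pow_eq_zero_iff two_ne_zero |>.1 <|
    (Finset.sum_eq_zero_iff_of_nonneg fun k _ => sq_nonneg (C k j)).1 hsum i (Finset.mem_univ i)

variable {m n : Type*} [Fintype m] [Fintype n] [DecidableEq n]

lemma l2_opNorm_transpose [DecidableEq m] (A : Matrix m n ℝ) : ‖Aᵀ‖ = ‖A‖ := by
  rw [← conjTranspose_eq_transpose_of_trivial, l2_opNorm_conjTranspose]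

lemma l2_opNorm_one_le : ‖(1 : Matrix n n ℝ)‖ ≤ 1 := by
  rw [← diagonal_one, l2_opNorm_diagonal]
  exact (pi_norm_le_iff_of_nonneg zero_le_one).2 fun _ => by simp

lemma l2_opNorm_transpose_mul_self (A : Matrix m n ℝ) : ‖Aᵀ * A‖ = ‖A‖ ^ 2 := by
  rw [← conjTranspose_eq_transpose_of_trivial, l2_opNorm_conjTranspose_mul_self, sq]

lemma l2_opNorm_mul_transpose_self [DecidableEq m] (A : Matrix m n ℝ) : ‖A * Aᵀ‖ = ‖A‖ ^ 2 := by
  simpa [l2_opNorm_transpose] using l2_opNorm_transpose_mul_self Aᵀ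

lemma l2_opNorm_le_one_of_transpose_mul_self_eq_diagonal {A : Matrix m n ℝ} {p : n → ℝ}
    (hp : ∀ i, |p i| ≤ 1) (h : Aᵀ * A = diagonal p) : ‖A‖ ≤ 1 := by
  have hA := l2_opNorm_transpose_mul_self A
  rw [h, l2_opNorm_diagonal] at hA
  have : ‖p‖ ≤ 1 := (pi_norm_le_iff_of_nonneg zero_le_one).2 fun i => by simpa using hp i
  nlinarith [norm_nonneg A]

lemma l2_opNorm_le_one_of_transpose_mul_self_eq_one {A : Matrix m n ℝ}
    (h : Aᵀ * A = 1) : ‖A‖ ≤ 1 :=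
  l2_opNorm_le_one_of_transpose_mul_self_eq_diagonal (p := 1) (fun _ => by simp)
    (by rw [h]; exact diagonal_one.symm)

lemma l2_opNorm_mul_le_of_le {l : Type*} [Fintype l] [DecidableEq l] {A : Matrix m n ℝ}
    {B : Matrix n l ℝ} {a b : ℝ} (hA : ‖A‖ ≤ a) (hB : ‖B‖ ≤ b) : ‖A * B‖ ≤ a * b :=
  (l2_opNorm_mul A B).trans (mul_le_mul hA hB (norm_nonneg B) ((norm_nonneg A).trans hA))

lemma l2_opNorm_transpose_mul_mul_le [DecidableEq m] {V : Matrix m n ℝ} (hV : Vᵀ * V = 1)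
    (A : Matrix m m ℝ) : ‖Vᵀ * A * V‖ ≤ ‖A‖ := by
  have hV1 := l2_opNorm_le_one_of_transpose_mul_self_eq_one hV
  have hVT1 : ‖Vᵀ‖ ≤ 1 := by rwa [l2_opNorm_transpose]
  simpa using l2_opNorm_mul_le_of_le (l2_opNorm_mul_le_of_le hVT1 le_rfl) hV1

lemma mem_spectrum_of_mulVec_eq {A : Matrix n n ℝ}
    {t : ℝ} {w : n → ℝ} (hw : w ≠ 0) (h : A *ᵥ w = t • w) : t ∈ spectrum ℝ A := by
  rw [spectrum.mem_iff, isUnit_iff_isUnit_det, isUnit_iff_ne_zero, not_not,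
    ← exists_mulVec_eq_zero_iff]
  exact ⟨w, hw, by ext; simp [sub_mulVec, h, algebraMap_eq_diagonal, mulVec_diagonal]⟩

lemma IsHermitian.abs_eigenvalues_le_l2_opNorm {A : Matrix n n ℝ} (hA : A.IsHermitian) (i : n) :
    |hA.eigenvalues i| ≤ ‖A‖ := by
  have : Nonempty n := ⟨i⟩
  exact spectrum.norm_le_norm_of_mem (hA.eigenvalues_mem_spectrum_real i)

lemma IsHermitian.eigenvalues_le_l2_opNorm {A : Matrix n n ℝ} (hA : A.IsHermitian) (i : n) :
    hA.eigenvalues i ≤ ‖A‖ :=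
  (le_abs_self _).trans (hA.abs_eigenvalues_le_l2_opNorm i)

lemma IsHermitian.exists_orthogonal_diagonalization {A : Matrix n n ℝ} (hA : A.IsHermitian) :
    ∃ Q : Matrix n n ℝ, Qᵀ * Q = 1 ∧ Q * Qᵀ = 1 ∧ A = Q * diagonal hA.eigenvalues * Qᵀ := by
  refine ⟨hA.eigenvectorUnitary, ?_, ?_, ?_⟩
  · simpa [star_eq_conjTranspose] using Unitary.coe_star_mul_self hA.eigenvectorUnitary
  · simpa [star_eq_conjTranspose] using Unitary.coe_mul_star_self hA.eigenvectorUnitary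
  · conv_lhs => rw [hA.spectral_theorem, Unitary.conjStarAlgAut_apply]
    simp [star_eq_conjTranspose, RCLike.ofReal_real_eq_id]

lemma IsHermitian.l2_opNorm_one_sub_smul_le {B : Matrix n n ℝ} (hB : B.IsHermitian)
    {μ a b : ℝ} (hμ : 0 ≤ μ) (hab : a ≤ b) (hμb : μ * b ≤ 1)
    (h : ∀ i, a ≤ hB.eigenvalues i ∧ hB.eigenvalues i ≤ b) : ‖1 - μ • B‖ ≤ 1 - μ * a := by
  obtain ⟨U, hUU, hUU', hBU⟩ := hB.exists_orthogonal_diagonalization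
  have hdiag : 1 - μ • B = U * diagonal (fun i => 1 - μ * hB.eigenvalues i) * Uᵀ := by
    have hsub :
        diagonal (fun i => 1 - μ * hB.eigenvalues i) = 1 - μ • diagonal hB.eigenvalues := by
      rw [← diagonal_one, ← diagonal_smul, diagonal_sub]; rfl
    conv_lhs => rw [hBU]
    rw [hsub, Matrix.mul_sub, Matrix.sub_mul, Matrix.mul_one, hUU', Matrix.mul_smul,
      Matrix.smul_mul]
  have hU : ‖U‖ ≤ 1 := l2_opNorm_le_one_of_transpose_mul_self_eq_one hUU
  have hUT : ‖Uᵀ‖ ≤ 1 := by rwa [l2_opNorm_transpose]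
  have hc : 0 ≤ 1 - μ * a := by nlinarith [mul_le_mul_of_nonneg_left hab hμ]
  have hD : ‖diagonal (fun i => 1 - μ * hB.eigenvalues i)‖ ≤ 1 - μ * a := by
    rw [l2_opNorm_diagonal]
    refine (pi_norm_le_iff_of_nonneg hc).2 fun i => ?_
    obtain ⟨hai, hib⟩ := h i
    rw [Real.norm_eq_abs, abs_le]
    constructor <;> nlinarith [mul_le_mul_of_nonneg_left hai hμ, mul_le_mul_of_nonneg_left hib hμ]
  simpa [hdiag] using l2_opNorm_mul_le_of_le (l2_opNorm_mul_le_of_le hU hD) hUT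

-- `W = C diag(lam^(-1/2))` normalises the orthogonal columns of `C`; its zero columns stay zero.
lemma exists_l2_opNorm_le_one_mul_diagonal_sqrt_eq {C : Matrix m n ℝ} {lam : n → ℝ}
    (hlam : ∀ i, 0 ≤ lam i) (hC : Cᵀ * C = diagonal lam) :
    ∃ W : Matrix m n ℝ, ‖W‖ ≤ 1 ∧ Wᵀ * C = diagonal (fun i => Real.sqrt (lam i)) ∧
      W * diagonal (fun i => Real.sqrt (lam i)) = C := by
  set g : n → ℝ := fun i => (Real.sqrt (lam i))⁻¹
  refine ⟨C * diagonal g, ?_, ?_, ?_⟩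
  · refine l2_opNorm_le_one_of_transpose_mul_self_eq_diagonal
      (p := fun i => g i * (lam i * g i)) (fun i => ?_) ?_
    · rcases (hlam i).eq_or_lt with h0 | hpos
      · simp [g, ← h0]
      · have hg : g i * (lam i * g i) = 1 := by
          simp only [g]
          field_simp
          exact (Real.sq_sqrt hpos.le).symm
        simp [hg]
    · rw [transpose_mul, diagonal_transpose, Matrix.mul_assoc, ← Matrix.mul_assoc Cᵀ, hC,
        diagonal_mul_diagonal, diagonal_mul_diagonal]
  · rw [transpose_mul, diagonal_transpose, Matrix.mul_assoc, hC, diagonal_mul_diagonal]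
    congr 1; funext i
    rw [inv_mul_eq_div, Real.div_sqrt]
  · ext i j
    rw [Matrix.mul_assoc, diagonal_mul_diagonal, mul_diagonal]
    rcases (hlam j).eq_or_lt with h0 | hpos
    · simp [apply_eq_zero_of_transpose_mul_self_eq_diagonal hC h0.symm i]
    · simp [g, inv_mul_cancel₀ (Real.sqrt_pos.2 hpos).ne']

-- `Y = Vᵀ` for the polar decomposition `A = V |A|`: then `Vᵀ A = |A|` and `Aᵀ = |A| Vᵀ`.
lemma exists_l2_opNorm_le_one_mul_mul_eq_transpose [DecidableEq m] (A : Matrix m n ℝ) :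
    ∃ Y : Matrix n m ℝ, ‖Y‖ ≤ 1 ∧ Y * A * Y = Aᵀ := by
  have hP : (Aᵀ * A).IsHermitian := by simpa using isHermitian_conjTranspose_mul_self A
  obtain ⟨Q, hQQ, hQQ', hspec⟩ := hP.exists_orthogonal_diagonalization
  have hlam : ∀ i, 0 ≤ hP.eigenvalues i := fun i => by
    simpa [conjTranspose_eq_transpose_of_trivial] using
      (posSemidef_conjTranspose_mul_self A).eigenvalues_nonneg i
  generalize hP.eigenvalues = lam at hlam hspec
  have hCC : (A * Q)ᵀ * (A * Q) = diagonal lam := by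
    calc (A * Q)ᵀ * (A * Q) = Qᵀ * (Aᵀ * A) * Q := by simp only [transpose_mul, Matrix.mul_assoc]
      _ = diagonal lam := by
        rw [hspec, ← Matrix.mul_assoc, ← Matrix.mul_assoc, hQQ, Matrix.one_mul, Matrix.mul_assoc,
          hQQ, Matrix.mul_one]
  obtain ⟨W, hW, hWC, hWD⟩ := exists_l2_opNorm_le_one_mul_diagonal_sqrt_eq hlam hCC
  refine ⟨Q * Wᵀ, ?_, ?_⟩
  · simpa using l2_opNorm_mul_le_of_le (l2_opNorm_le_one_of_transpose_mul_self_eq_one hQQ)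
      (show ‖Wᵀ‖ ≤ 1 by rwa [l2_opNorm_transpose])
  · calc Q * Wᵀ * A * (Q * Wᵀ) = Q * (Wᵀ * (A * Q)) * Wᵀ := by simp only [Matrix.mul_assoc]
      _ = (W * diagonal (fun i => Real.sqrt (lam i)) * Qᵀ)ᵀ := by
          rw [hWC, transpose_mul, transpose_mul, diagonal_transpose, transpose_transpose,
            Matrix.mul_assoc]
      _ = Aᵀ := by rw [hWD, Matrix.mul_assoc, hQQ', Matrix.mul_one]

end Matrix

lemma sigmaMin_le_of_mulVec_eq {d₁ d₂ : ℕ} (A : Matrix (Fin d₁) (Fin d₂) ℝ) {s : ℝ} (hs : 0 < s)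
    {w : Fin d₂ → ℝ} (hw : w ≠ 0) (h : (Aᵀ * A) *ᵥ w = s ^ 2 • w) : sigmaMin A ≤ s := by
  have hAA : (Aᵀ * A).IsHermitian := by
    simpa using isHermitian_conjTranspose_mul_self A
  obtain ⟨i, hi⟩ : s ^ 2 ∈ Set.range hAA.eigenvalues := by
    rw [← hAA.spectrum_real_eq_range_eigenvalues]; exact Matrix.mem_spectrum_of_mulVec_eq hw h
  exact csInf_le ⟨0, fun _ ht => ht.1.le⟩ ⟨hs, i, hi.symm⟩

lemma sigmaMin_le_l2_opNorm {d₁ d₂ : ℕ} (A : Matrix (Fin d₁) (Fin d₂) ℝ) : sigmaMin A ≤ ‖A‖ := by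
  have hAA : (Aᵀ * A).IsHermitian := by
    simpa using isHermitian_conjTranspose_mul_self A
  rcases Set.eq_empty_or_nonempty {s : ℝ | 0 < s ∧ ∃ i, s ^ 2 = hAA.eigenvalues i}
    with he | ⟨s, hs, i, hi⟩
  · rw [sigmaMin, he, Real.sInf_empty]; exact norm_nonneg A
  · have hσs : sigmaMin A ≤ s := csInf_le ⟨0, fun _ ht => ht.1.le⟩ ⟨hs, i, hi⟩
    refine hσs.trans ?_
    have : s ^ 2 ≤ ‖A‖ ^ 2 := by
      rw [hi, ← l2_opNorm_transpose_mul_self]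
      exact hAA.eigenvalues_le_l2_opNorm i
    exact (pow_le_pow_iff_left₀ hs.le (norm_nonneg A) two_ne_zero).1 this

lemma sigmaMin_le_eigenvalues_of_compression {d r : ℕ} {X : Matrix (Fin d) (Fin d) ℝ}
    (hX : X.PosSemidef) (hrank : X.rank = r) {V : Matrix (Fin d) (Fin r) ℝ}
    (hV : Vᵀ * V = 1) (hVX : V * Vᵀ * X = X) (hB : (Vᵀ * X * V).IsHermitian) (i : Fin r) :
    sigmaMin X ≤ hB.eigenvalues i := by
  set B := Vᵀ * X * V
  have hXsym : Xᵀ = X := by rw [← conjTranspose_eq_transpose_of_trivial]; exact hX.1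
  have hXV : X * V = V * B := by
    calc X * V = V * Vᵀ * X * V := by rw [hVX]
      _ = V * B := by simp only [B, Matrix.mul_assoc]
  have hXVV : X * V * Vᵀ = X := by
    simpa [Matrix.transpose_mul, hXsym, Matrix.mul_assoc] using congrArg transpose hVX
  -- `X = V B Vᵀ` has rank `r`, so `B` is invertible; an eigenvector `v` of `B` yields the
  -- eigenvector `V v` of `Xᵀ X`.
  have hβ_ne : hB.eigenvalues i ≠ 0 := by
    intro h0
    have hlt : Fintype.card {j // hB.eigenvalues j ≠ 0} < r := by
      simpa using Fintype.card_subtype_lt (p := fun j => hB.eigenvalues j ≠ 0) (x := i) (by simpa)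
    have hle : X.rank ≤ B.rank := by
      rw [← hXVV, hXV]; exact (rank_mul_le_left _ _).trans (rank_mul_le_right _ _)
    rw [hrank, hB.rank_eq_card_non_zero_eigs] at hle
    omega
  have hBpsd : B.PosSemidef := by
    simpa [conjTranspose_eq_transpose_of_trivial] using hX.conjTranspose_mul_mul_same V
  have hβ_pos : 0 < hB.eigenvalues i := lt_of_le_of_ne (hBpsd.eigenvalues_nonneg i) (Ne.symm hβ_ne)
  set v : Fin r → ℝ := ⇑(hB.eigenvectorBasis i)
  have hv : B *ᵥ v = hB.eigenvalues i • v := hB.mulVec_eigenvectorBasis i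
  have hv0 : v ≠ 0 := fun h =>
    hB.eigenvectorBasis.orthonormal.ne_zero i (by ext j; simpa using congrFun h j)
  refine sigmaMin_le_of_mulVec_eq X hβ_pos (w := V *ᵥ v) (fun h => hv0 ?_) ?_
  · simpa [mulVec_mulVec, hV] using congrArg (Vᵀ *ᵥ ·) h
  · have hXXV : Xᵀ * X * V = V * (B * B) := by
      rw [hXsym, Matrix.mul_assoc, hXV, ← Matrix.mul_assoc, hXV, Matrix.mul_assoc]
    rw [mulVec_mulVec, hXXV, ← mulVec_mulVec, ← mulVec_mulVec, hv, mulVec_smul, hv, smul_smul,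
      mulVec_smul, sq]

universe u

-- Every term is written as `c • (X * Y * Z)`, with identity factors where needed, so that the
-- ideal inequality applies termwise; `Y` is `V⋆ᵀ Δ`, `E V_U` or `(E V_U)ᵀ`.
lemma transpose_mul_gd_step_sub_eq {n k : Type u} [Fintype n] [Fintype k] [DecidableEq n]
    [DecidableEq k] (Vs VU U : Matrix n k ℝ) (Xs M : Matrix n n ℝ) (μ : ℝ)
    (hXs : Xsᵀ = Xs) (hM : Mᵀ = M) (hVsX : Vs * Vsᵀ * Xs = Xs) (hVUU : VU * VUᵀ * U = U) :
    Vsᵀ * ((U + μ • (M * U)) * (U + μ • (M * U))ᵀ - Xs)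
      = (-1 : ℝ) • (((1 : Matrix k k ℝ) - μ • (Vsᵀ * Xs * Vs)) * (Vsᵀ * (Xs - U * Uᵀ))
          * ((1 : Matrix n n ℝ) - μ • (U * Uᵀ)))
      + (μ ^ 2) • ((Vsᵀ * Xs * Vs) * (Vsᵀ * (Xs - U * Uᵀ)) * (U * Uᵀ))
      + (-μ) • ((1 : Matrix k k ℝ) * (Vsᵀ * (Xs - U * Uᵀ)) * (Xs - U * Uᵀ))
      + μ • (Vsᵀ * ((M - (Xs - U * Uᵀ)) * VU) * (VUᵀ * (U * Uᵀ)))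
      + μ • ((Vsᵀ * (U * Uᵀ) * VU) * ((M - (Xs - U * Uᵀ)) * VU)ᵀ * (1 : Matrix n n ℝ))
      + (μ ^ 2) • ((1 : Matrix k k ℝ) * (Vsᵀ * (Xs - U * Uᵀ)) * ((U * Uᵀ) * M))
      + (μ ^ 2) • (Vsᵀ * ((M - (Xs - U * Uᵀ)) * VU) * (VUᵀ * ((U * Uᵀ) * M))) := by
  have hXsVs : Xs * Vs * Vsᵀ = Xs := by
    simpa [transpose_mul, hXs, Matrix.mul_assoc] using congrArg transpose hVsX
  have hUVU : Uᵀ * VU * VUᵀ = Uᵀ := by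
    simpa [transpose_mul, Matrix.mul_assoc] using congrArg transpose hVUU
  -- `n` and `k` share the universe `u` so that these cancellations apply to both column types.
  have hXsVs' : ∀ {l : Type u} [Fintype l] (Z : Matrix n l ℝ), Xs * (Vs * (Vsᵀ * Z)) = Xs * Z :=
    fun Z => by rw [← Matrix.mul_assoc, ← Matrix.mul_assoc, hXsVs]
  have hVUU' : ∀ {l : Type u} [Fintype l] (Z : Matrix k l ℝ), VU * (VUᵀ * (U * Z)) = U * Z :=
    fun Z => by rw [← Matrix.mul_assoc, ← Matrix.mul_assoc, hVUU]
  have hUVU' : ∀ {l : Type u} [Fintype l] (Z : Matrix n l ℝ), Uᵀ * (VU * (VUᵀ * Z)) = Uᵀ * Z :=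
    fun Z => by rw [← Matrix.mul_assoc, ← Matrix.mul_assoc, hUVU]
  simp only [transpose_add, transpose_smul, transpose_mul, transpose_sub, transpose_transpose,
    hM, hXs]
  simp only [Matrix.mul_add, Matrix.add_mul, Matrix.mul_sub, Matrix.sub_mul, Matrix.mul_one,
    Matrix.one_mul, Matrix.smul_mul, Matrix.mul_smul, smul_sub, smul_add, smul_smul,
    Matrix.mul_assoc, hXsVs', hVUU', hUVU']
  module

-- the norm `|||·|||` of the paper, given on matrices of every size
structure IsIdealNorm (N : ∀ m n : ℕ, Matrix (Fin m) (Fin n) ℝ → ℝ) : Prop where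
  nonneg : ∀ m n (X : Matrix (Fin m) (Fin n) ℝ), 0 ≤ N m n X
  add_le : ∀ m n (X Y : Matrix (Fin m) (Fin n) ℝ), N m n (X + Y) ≤ N m n X + N m n Y
  smul : ∀ m n (c : ℝ) (X : Matrix (Fin m) (Fin n) ℝ), N m n (c • X) = |c| * N m n X
  mul_mul_le : ∀ m n p q (X : Matrix (Fin m) (Fin n) ℝ) (Y : Matrix (Fin n) (Fin p) ℝ)
    (Z : Matrix (Fin p) (Fin q) ℝ), N m q (X * Y * Z) ≤ ‖X‖ * N n p Y * ‖Z‖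

namespace IsIdealNorm

variable {N : ∀ m n : ℕ, Matrix (Fin m) (Fin n) ℝ → ℝ}

lemma smul_mul_mul_le (hN : IsIdealNorm N) {m n p q : ℕ} (c : ℝ) {X : Matrix (Fin m) (Fin n) ℝ}
    {Y : Matrix (Fin n) (Fin p) ℝ} {Z : Matrix (Fin p) (Fin q) ℝ} {x y z : ℝ}
    (hX : ‖X‖ ≤ x) (hY : N n p Y ≤ y) (hZ : ‖Z‖ ≤ z) :
    N m q (c • (X * Y * Z)) ≤ |c| * (x * y * z) := by
  rw [hN.smul]
  gcongr
  calc N m q (X * Y * Z) ≤ ‖X‖ * N n p Y * ‖Z‖ := hN.mul_mul_le _ _ _ _ X Y Z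
    _ ≤ x * y * z := by
      have hx := (norm_nonneg X).trans hX
      have hy := (hN.nonneg n p Y).trans hY
      exact mul_le_mul (mul_le_mul hX hY (hN.nonneg n p Y) hx) hZ (norm_nonneg Z) (by positivity)

lemma transpose_le (hN : IsIdealNorm N) {m n : ℕ} (A : Matrix (Fin m) (Fin n) ℝ) :
    N n m Aᵀ ≤ N m n A := by
  obtain ⟨Y, hY, hYAY⟩ := Matrix.exists_l2_opNorm_le_one_mul_mul_eq_transpose A
  simpa [hYAY] using hN.smul_mul_mul_le 1 (Y := A) hY le_rfl hY

lemma add_le_of_le (hN : IsIdealNorm N) {m n : ℕ} {X Y : Matrix (Fin m) (Fin n) ℝ} {x y : ℝ}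
    (hX : N m n X ≤ x) (hY : N m n Y ≤ y) : N m n (X + Y) ≤ x + y :=
  (hN.add_le m n X Y).trans (add_le_add hX hY)

lemma transpose_mul_gd_step_sub_le (hN : IsIdealNorm N) {d r : ℕ}
    {Vs VU U : Matrix (Fin d) (Fin r) ℝ} {Xs M : Matrix (Fin d) (Fin d) ℝ} {μ σ L : ℝ}
    (hXs : Xsᵀ = Xs) (hM : Mᵀ = M) (hVsX : Vs * Vsᵀ * Xs = Xs) (hVUU : VU * VUᵀ * U = U)
    (hVs : ‖Vs‖ ≤ 1) (hVU : ‖VU‖ ≤ 1) (hB : ‖Vsᵀ * Xs * Vs‖ ≤ L) (hS : ‖U * Uᵀ‖ ≤ 2 * L)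
    (hΔ : ‖Xs - U * Uᵀ‖ ≤ σ / 48) (hE : ‖M - (Xs - U * Uᵀ)‖ ≤ σ / 48)
    (h1B : ‖1 - μ • (Vsᵀ * Xs * Vs)‖ ≤ 1 - μ * σ) (h1S : ‖1 - μ • (U * Uᵀ)‖ ≤ 1)
    (hμ : 0 < μ) (hμσ : μ * (1024 * L ^ 2) ≤ σ) (hσL : σ ≤ L) :
    N r d (Vsᵀ * ((U + μ • (M * U)) * (U + μ • (M * U))ᵀ - Xs))
      ≤ (1 - μ / 8 * σ) * N r d (Vsᵀ * (Xs - U * Uᵀ))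
        + 5 * μ * L * N d r ((M - (Xs - U * Uᵀ)) * VU) := by
  rw [transpose_mul_gd_step_sub_eq Vs VU U Xs M μ hXs hM hVsX hVUU]
  set S := U * Uᵀ
  set P := Vsᵀ * (Xs - S)
  set F := (M - (Xs - S)) * VU
  have hMσ : ‖M‖ ≤ σ / 24 :=
    calc ‖M‖ = ‖(Xs - S) + (M - (Xs - S))‖ := by rw [add_sub_cancel]
      _ ≤ σ / 48 + σ / 48 := norm_add_le_of_le hΔ hE
      _ = σ / 24 := by ring
  have hVsT : ‖Vsᵀ‖ ≤ 1 := by rwa [Matrix.l2_opNorm_transpose]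
  have hVUT : ‖VUᵀ‖ ≤ 1 := by rwa [Matrix.l2_opNorm_transpose]
  have hL : 0 ≤ L := (norm_nonneg _).trans hB
  have hσ : 0 ≤ σ := by linarith [norm_nonneg (Xs - S)]
  have hSM := Matrix.l2_opNorm_mul_le_of_le hS hMσ
  have hVUS := Matrix.l2_opNorm_mul_le_of_le hVUT hS
  have hVUSM := Matrix.l2_opNorm_mul_le_of_le hVUT hSM
  have hSVU := Matrix.l2_opNorm_mul_le_of_le (Matrix.l2_opNorm_mul_le_of_le hVsT hS) hVU
  have b1 := hN.smul_mul_mul_le (-1) h1B (le_refl (N r d P)) h1S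
  have b2 := hN.smul_mul_mul_le (μ ^ 2) hB (le_refl (N r d P)) hS
  have b3 := hN.smul_mul_mul_le (-μ) Matrix.l2_opNorm_one_le (le_refl (N r d P)) hΔ
  have b4 := hN.smul_mul_mul_le μ hVsT (le_refl (N d r F)) hVUS
  have b5 := hN.smul_mul_mul_le μ hSVU (hN.transpose_le F) Matrix.l2_opNorm_one_le
  have b6 := hN.smul_mul_mul_le (μ ^ 2) Matrix.l2_opNorm_one_le (le_refl (N r d P)) hSM
  have b7 := hN.smul_mul_mul_le (μ ^ 2) hVsT (le_refl (N d r F)) hVUSM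
  refine (hN.add_le_of_le (hN.add_le_of_le (hN.add_le_of_le (hN.add_le_of_le
    (hN.add_le_of_le (hN.add_le_of_le b1 b2) b3) b4) b5) b6) b7).trans ?_
  rw [abs_neg, abs_one, abs_neg, abs_of_pos hμ, abs_of_nonneg (sq_nonneg μ)]
  have ha := hN.nonneg r d P
  have he := hN.nonneg d r F
  have hμL : μ * L ≤ 1 / 1024 := by nlinarith
  have hμσ' : μ * σ ≤ 1 / 1024 := by nlinarith
  have k1 : μ ^ 2 * L ^ 2 * N r d P ≤ μ * σ / 1024 * N r d P := by
    gcongr; nlinarith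
  have k2 : μ * L * (μ * σ * N r d P) ≤ 1 / 1024 * (μ * σ * N r d P) := by gcongr
  have k3 : μ * σ * (μ * L * N d r F) ≤ 1 / 1024 * (μ * L * N d r F) := by gcongr
  linarith [mul_nonneg (mul_nonneg hμ.le hσ) ha, mul_nonneg (mul_nonneg hμ.le hL) he]

end IsIdealNorm

lemma mul_sq_le_and_mul_le_of_le_one_div {μ σ L : ℝ} (hμ0 : 0 < μ) (hσ : 0 ≤ σ) (hσL : σ ≤ L)
    (hμ : μ ≤ 1 / (1024 * (L / σ) * L)) : μ * (1024 * L ^ 2) ≤ σ ∧ μ * L ≤ 1 / 1024 := by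
  have hpos : 0 < 1024 * (L / σ) * L := by
    by_contra h
    linarith [one_div_nonpos.2 (not_lt.1 h)]
  have hσ0 : 0 < σ := hσ.lt_of_ne fun h => by simp [← h] at hpos
  have hL : 0 < L := hσ0.trans_le hσL
  rw [show 1024 * (L / σ) * L = 1024 * L ^ 2 / σ by ring, one_div_div,
    le_div_iff₀ (by positivity)] at hμ
  refine ⟨hμ, ?_⟩
  nlinarith

theorem statement10_general {d r m : ℕ}
    (Xs : Matrix (Fin d) (Fin d) ℝ) (hXpsd : Xs.PosSemidef) (hXrank : Xs.rank = r)
    (Vs : Matrix (Fin d) (Fin r) ℝ)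
    (hVs : Vsᵀ * Vs = 1) (hVsX : Vs * Vsᵀ * Xs = Xs)
    (U VU : Matrix (Fin d) (Fin r) ℝ)
    (hVU : VUᵀ * VU = 1) (hVUU : VU * VUᵀ * U = U)
    (𝒜 : Matrix (Fin d) (Fin d) ℝ →ₗ[ℝ] (Fin m → ℝ))
    (𝒜s : (Fin m → ℝ) →ₗ[ℝ] Matrix (Fin d) (Fin d) ℝ)
    (hsym : ∀ y, (𝒜s y).IsSymm)
    (μ : ℝ) (hμ0 : 0 < μ)
    (hμ : μ ≤ 1 / (1024 * (specNorm Xs / sigmaMin Xs) * specNorm Xs))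
    (hUb : specNorm U ≤ Real.sqrt (2 * specNorm Xs))
    (hclose : specNorm (Xs - U * Uᵀ) ≤ sigmaMin Xs / 48)
    (hE : specNorm (𝒜s (𝒜 (Xs - U * Uᵀ)) - (Xs - U * Uᵀ)) ≤ sigmaMin Xs / 48)
    (N : ∀ m' n : ℕ, Matrix (Fin m') (Fin n) ℝ → ℝ)
    (hN0 : ∀ m' n (X : Matrix (Fin m') (Fin n) ℝ), 0 ≤ N m' n X)
    (hNadd : ∀ m' n (X Y : Matrix (Fin m') (Fin n) ℝ), N m' n (X + Y) ≤ N m' n X + N m' n Y)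
    (hNsmul : ∀ m' n (c : ℝ) (X : Matrix (Fin m') (Fin n) ℝ), N m' n (c • X) = |c| * N m' n X)
    (hNmul : ∀ m' n p q (X : Matrix (Fin m') (Fin n) ℝ) (Y : Matrix (Fin n) (Fin p) ℝ)
        (Z : Matrix (Fin p) (Fin q) ℝ),
      N m' q (X * Y * Z) ≤ specNorm X * N n p Y * specNorm Z) :
    N r d (Vsᵀ * ((U + μ • (𝒜s (𝒜 (Xs - U * Uᵀ)) * U))
          * (U + μ • (𝒜s (𝒜 (Xs - U * Uᵀ)) * U))ᵀ - Xs))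
      ≤ (1 - μ / 8 * sigmaMin Xs) * N r d (Vsᵀ * (Xs - U * Uᵀ))
        + 5 * μ * specNorm Xs * N d r ((𝒜s (𝒜 (Xs - U * Uᵀ)) - (Xs - U * Uᵀ)) * VU) := by
  have hXs : Xsᵀ = Xs := by rw [← conjTranspose_eq_transpose_of_trivial]; exact hXpsd.1
  have hσL : sigmaMin Xs ≤ ‖Xs‖ := sigmaMin_le_l2_opNorm Xs
  obtain ⟨hμσ, hμL⟩ := mul_sq_le_and_mul_le_of_le_one_div hμ0
    (Real.sInf_nonneg fun _ hs => hs.1.le) hσL hμ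
  have hB : ‖Vsᵀ * Xs * Vs‖ ≤ ‖Xs‖ := l2_opNorm_transpose_mul_mul_le hVs Xs
  have hS : ‖U * Uᵀ‖ ≤ 2 * ‖Xs‖ := by
    rw [l2_opNorm_mul_transpose_self, ← Real.sq_sqrt (by positivity : (0 : ℝ) ≤ 2 * ‖Xs‖)]
    gcongr
    exact hUb
  have hBh : (Vsᵀ * Xs * Vs).IsHermitian := by
    simpa [conjTranspose_eq_transpose_of_trivial] using (hXpsd.conjTranspose_mul_mul_same Vs).1
  have hSpsd : (U * Uᵀ).PosSemidef := by
    simpa [conjTranspose_eq_transpose_of_trivial] using posSemidef_self_mul_conjTranspose U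
  have h1B := hBh.l2_opNorm_one_sub_smul_le hμ0.le hσL (by linarith) fun i =>
    ⟨sigmaMin_le_eigenvalues_of_compression hXpsd hXrank hVs hVsX hBh i,
      (hBh.eigenvalues_le_l2_opNorm i).trans hB⟩
  have h1S : ‖1 - μ • (U * Uᵀ)‖ ≤ 1 := by
    simpa using hSpsd.1.l2_opNorm_one_sub_smul_le hμ0.le (by positivity) (by linarith) fun i =>
      ⟨hSpsd.eigenvalues_nonneg i, (hSpsd.1.eigenvalues_le_l2_opNorm i).trans hS⟩
  exact IsIdealNorm.transpose_mul_gd_step_sub_le ⟨hN0, hNadd, hNsmul, hNmul⟩ hXs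
    (hsym _) hVsX hVUU (l2_opNorm_le_one_of_transpose_mul_self_eq_one hVs)
    (l2_opNorm_le_one_of_transpose_mul_self_eq_one hVU) hB hS hclose hE h1B h1S hμ0 hμσ hσL

theorem statement10 {d r m : ℕ} (hrd : r ≤ d)
    (Xs : Matrix (Fin d) (Fin d) ℝ) (hXpsd : Xs.PosSemidef) (hXrank : Xs.rank = r)
    (Vs : Matrix (Fin d) (Fin r) ℝ) (Vp : Matrix (Fin d) (Fin (d - r)) ℝ)
    (hVs : Vsᵀ * Vs = 1) (hVsX : Vs * Vsᵀ * Xs = Xs)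
    (hVp : Vpᵀ * Vp = 1) (hVsVp : Vsᵀ * Vp = 0)
    (U VU : Matrix (Fin d) (Fin r) ℝ)
    (hVU : VUᵀ * VU = 1) (hVUU : VU * VUᵀ * U = U)
    (𝒜 : Matrix (Fin d) (Fin d) ℝ →ₗ[ℝ] (Fin m → ℝ))
    (𝒜s : (Fin m → ℝ) →ₗ[ℝ] Matrix (Fin d) (Fin d) ℝ)
    (hsym : ∀ y, (𝒜s y).IsSymm)
    (hadj : ∀ (y : Fin m → ℝ) (Z : Matrix (Fin d) (Fin d) ℝ), Z.IsSymm →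
      tinner (𝒜s y) Z = ∑ i, y i * 𝒜 Z i)
    (μ : ℝ) (hμ0 : 0 < μ)
    (hμ : μ ≤ 1 / (1024 * (specNorm Xs / sigmaMin Xs) * specNorm Xs))
    (hangle : specNorm (Vpᵀ * VU) ≤ 1 / 2)
    (hUb : specNorm U ≤ Real.sqrt (2 * specNorm Xs))
    (hclose : specNorm (Xs - U * Uᵀ) ≤ sigmaMin Xs / 48)
    (hE : specNorm (𝒜s (𝒜 (Xs - U * Uᵀ)) - (Xs - U * Uᵀ)) ≤ sigmaMin Xs / 48)
    (N : ∀ m' n : ℕ, Matrix (Fin m') (Fin n) ℝ → ℝ)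
    (hN0 : ∀ m' n (X : Matrix (Fin m') (Fin n) ℝ), 0 ≤ N m' n X)
    (hNadd : ∀ m' n (X Y : Matrix (Fin m') (Fin n) ℝ), N m' n (X + Y) ≤ N m' n X + N m' n Y)
    (hNsmul : ∀ m' n (c : ℝ) (X : Matrix (Fin m') (Fin n) ℝ), N m' n (c • X) = |c| * N m' n X)
    (hNmul : ∀ m' n p q (X : Matrix (Fin m') (Fin n) ℝ) (Y : Matrix (Fin n) (Fin p) ℝ)
        (Z : Matrix (Fin p) (Fin q) ℝ),
      N m' q (X * Y * Z) ≤ specNorm X * N n p Y * specNorm Z) :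
    N r d (Vsᵀ * ((U + μ • (𝒜s (𝒜 (Xs - U * Uᵀ)) * U))
          * (U + μ • (𝒜s (𝒜 (Xs - U * Uᵀ)) * U))ᵀ - Xs))
      ≤ (1 - μ / 8 * sigmaMin Xs) * N r d (Vsᵀ * (Xs - U * Uᵀ))
        + 5 * μ * specNorm Xs * N d r ((𝒜s (𝒜 (Xs - U * Uᵀ)) - (Xs - U * Uᵀ)) * VU) :=
  statement10_general Xs hXpsd hXrank Vs hVs hVsX U VU hVU hVUU 𝒜 𝒜s hsym μ hμ0 hμ hUb hclose hE N
    hN0 hNadd hNsmul hNmul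
end

section
/- The set D_r = {X ∈ S^d : ‖X‖_F = 1, rank(X) ≤ r} of unit-Frobenius-norm symmetric matrices of rank at most r admits, for every ε > 0, an ε-net (in Frobenius distance) of cardinality at most (1 + 6/ε)^{(2d+1)r}. -/
open scoped BigOperators
open Matrix

/-
Write `X = ∑ᵢ λᵢ uᵢ uᵢᵀ` with `(uᵢ)` an orthonormal family of `r` eigenvectors containing all
those with nonzero eigenvalue, so that `‖λ‖ = ‖X‖_F = 1`. Approximate `λ` by a point `μ` of an
`ε/3`-net of the unit sphere of `ℝʳ`, which has at most `(1 + 6/ε)ʳ` points by volume comparison,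
and `(uᵢ)` by an orthonormal family `(gᵢ)` with every `‖uᵢ - gᵢ‖ ≤ ε/3`, taken from a net of the
orthonormal `r`-frames with at most `(1 + 12/ε)^(dr) ≤ (1 + 6/ε)^(2dr)` points. Then
`X - ∑ μᵢ gᵢ gᵢᵀ = ∑ (λᵢ - μᵢ) uᵢ uᵢᵀ + ∑ μᵢ (uᵢ - gᵢ) uᵢᵀ + ∑ μᵢ gᵢ (uᵢ - gᵢ)ᵀ`, and since
`‖∑ aᵢ vᵢᵀ‖_F² = ∑ ‖aᵢ‖²` for every orthonormal family `(vᵢ)`, each term has norm at most `ε/3`.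
-/

open Metric MeasureTheory Module
open scoped NNReal ENNReal Matrix.Norms.Frobenius

namespace Metric

lemma exists_finset_isCover_of_coveringNumber_le {X : Type*} [PseudoEMetricSpace X]
    {ε : ℝ≥0} {A : Set X} {k : ℕ} (h : coveringNumber ε A ≤ k) :
    ∃ N : Finset X, ↑N ⊆ A ∧ N.card ≤ k ∧ IsCover ε A N := by
  obtain ⟨C, hCA, hC, hcover, hcard⟩ :=
    exists_set_encard_eq_coveringNumber (h.trans_lt (ENat.natCast_lt_top k)).ne
  refine ⟨hC.toFinset, by simpa using hCA, ?_, by simpa using hcover⟩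
  rw [← hcard, hC.encard_eq_coe_toFinset_card] at h
  exact_mod_cast h

lemma IsCover.exists_dist_le {X : Type*} [PseudoMetricSpace X] {ε : ℝ≥0} {s N : Set X}
    (h : IsCover ε s N) {x : X} (hx : x ∈ s) : ∃ y ∈ N, dist x y ≤ ε := by
  simpa using isCover_iff_subset_iUnion_closedBall.mp h hx

section FiniteDimensional
variable {E : Type*} [NormedAddCommGroup E] [NormedSpace ℝ E] [FiniteDimensional ℝ E]

lemma IsSeparated.card_le_of_subset_closedBall {δ : ℝ≥0} (hδ : 0 < δ) {T : Finset E}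
    (hT : (T : Set E) ⊆ closedBall 0 1) (hsep : IsSeparated δ (T : Set E)) :
    (T.card : ℝ) ≤ (1 + 2 / δ) ^ finrank ℝ E := by
  borelize E
  set μ : Measure E := Measure.addHaar
  set B := μ.real (ball (0 : E) 1)
  have hB : 0 < B := ENNReal.toReal_pos (measure_ball_pos μ _ one_pos).ne' measure_ball_lt_top.ne
  have hball (x : E) {r : ℝ} (hr : 0 < r) : μ.real (ball x r) = r ^ finrank ℝ E * B := by
    simp [μ, B, measureReal_def, Measure.addHaar_ball_of_pos μ x hr, ENNReal.toReal_ofReal,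
      hr.le]
  have hδ' : (0 : ℝ) < δ / 2 := by positivity
  have hdisj : (T : Set E).PairwiseDisjoint (fun t => ball t (δ / 2)) := by
    intro s hs t ht hst
    have : (δ : ℝ) < dist s t := by
      have : (δ : ℝ≥0∞) < edist s t := hsep hs ht hst
      rwa [edist_dist, ← ENNReal.ofReal_coe_nnreal, ENNReal.ofReal_lt_ofReal_iff_of_nonneg
        δ.coe_nonneg] at this
    exact ball_disjoint_ball (by linarith)
  have hsub : (⋃ t ∈ T, ball t (δ / 2)) ⊆ ball 0 (1 + δ / 2) := by
    simp only [Set.iUnion_subset_iff]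
    intro t ht
    exact ball_subset_ball' (by linarith [mem_closedBall.mp (hT ht)])
  have key : (T.card : ℝ) * ((δ / 2) ^ finrank ℝ E * B) ≤ (1 + δ / 2) ^ finrank ℝ E * B := by
    calc (T.card : ℝ) * ((δ / 2) ^ finrank ℝ E * B) = ∑ t ∈ T, μ.real (ball t (δ / 2)) := by
          simp [hball _ hδ']
      _ = μ.real (⋃ t ∈ T, ball t (δ / 2)) :=
          (measureReal_biUnion_finset hdisj (fun _ _ => measurableSet_ball)).symm
      _ ≤ μ.real (ball 0 (1 + δ / 2)) := measureReal_mono hsub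
      _ = (1 + δ / 2) ^ finrank ℝ E * B := hball 0 (by positivity)
  calc (T.card : ℝ) ≤ (1 + δ / 2) ^ finrank ℝ E / (δ / 2) ^ finrank ℝ E := by
        rw [le_div_iff₀ (by positivity)]
        nlinarith
    _ = (1 + 2 / δ) ^ finrank ℝ E := by
        rw [← div_pow]
        congr 1
        field_simp
        ring

lemma packingNumber_le_of_subset_closedBall {δ : ℝ≥0} (hδ : 0 < δ) {A : Set E}
    (hA : A ⊆ closedBall 0 1) : packingNumber δ A ≤ ⌊(1 + 2 / (δ : ℝ)) ^ finrank ℝ E⌋₊ := by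
  simp only [packingNumber, iSup_le_iff]
  intro C hCA hC
  by_contra! hlt
  obtain ⟨t, htC, htcard⟩ := Set.exists_subset_encard_eq (Order.add_one_le_of_lt hlt)
  have ht : t.Finite := Set.finite_of_encard_eq_coe htcard
  have hle := IsSeparated.card_le_of_subset_closedBall hδ (T := ht.toFinset)
    (by simpa using htC.trans (hCA.trans hA)) (by simpa using hC.subset htC)
  rw [ht.encard_eq_coe_toFinset_card] at htcard
  have hcard : ht.toFinset.card = ⌊(1 + 2 / (δ : ℝ)) ^ finrank ℝ E⌋₊ + 1 := by
    exact_mod_cast htcard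
  have hfloor := Nat.le_floor hle
  omega

end FiniteDimensional

lemma externalCoveringNumber_orthonormal_le {E ι : Type*} [NormedAddCommGroup E]
    [InnerProductSpace ℝ E] [Fintype ι] [DecidableEq ι]
    {δ : ℝ≥0} {N : Finset E} (hN : IsCover δ (sphere 0 1) (N : Set E)) :
    externalCoveringNumber δ {u : ι → E | Orthonormal ℝ u} ≤ N.card ^ Fintype.card ι := by
  refine (IsCover.externalCoveringNumber_le_encard
    (C := (Fintype.piFinset fun _ : ι => N : Set (ι → E))) ?_).trans ?_
  · intro u hu
    choose g hgN hg using fun i => hN (by simpa using (hu.1 i : ‖u i‖ = 1))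
    exact ⟨g, by simpa using hgN, edist_pi_le_iff.mpr hg⟩
  · simp

end Metric

lemma frobNorm_eq_norm {m n : ℕ} (A : Matrix (Fin m) (Fin n) ℝ) : frobNorm A = ‖A‖ := by
  simp [frobNorm, frobenius_norm_def, Real.sqrt_eq_rpow]

lemma Matrix.frobenius_norm_sq_eq_sum {m n : Type*} [Fintype m] [Fintype n]
    (A : Matrix m n ℝ) : ‖A‖ ^ 2 = ∑ i, ∑ j, A i j ^ 2 := by
  rw [frobenius_norm_def, ← Real.sqrt_eq_rpow, Real.sq_sqrt (by positivity)]
  simp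

lemma Matrix.frobenius_norm_sq_sum_vecMulVec {ι m n : Type*} [Fintype ι] [Fintype m] [Fintype n]
    {v : ι → EuclideanSpace ℝ n} (hv : Orthonormal ℝ v) (a : ι → EuclideanSpace ℝ m) :
    ‖∑ i, vecMulVec ⇑(a i) ⇑(v i)‖ ^ 2 = ∑ i, ‖a i‖ ^ 2 := by
  have hrow (p : m) : ∑ q, (∑ i, vecMulVec ⇑(a i) ⇑(v i)) p q ^ 2 = ∑ i, a i p ^ 2 := by
    have := hv.inner_sum (fun i => a i p) (fun i => a i p) Finset.univ
    rw [real_inner_self_eq_norm_sq, EuclideanSpace.norm_sq_eq] at this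
    simpa [Matrix.sum_apply, vecMulVec_apply, sq] using this
  simp_rw [frobenius_norm_sq_eq_sum, hrow, EuclideanSpace.norm_sq_eq, Real.norm_eq_abs, sq_abs]
  exact Finset.sum_comm

noncomputable def spectralSum {ι n : Type*} [Fintype ι] (c : EuclideanSpace ℝ ι)
    (u : ι → EuclideanSpace ℝ n) : Matrix n n ℝ :=
  ∑ i, c i • vecMulVec ⇑(u i) ⇑(u i)

section
variable {ι n : Type*} [Fintype ι]

lemma isSymm_spectralSum (c : EuclideanSpace ℝ ι) (u : ι → EuclideanSpace ℝ n) :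
    (spectralSum c u).IsSymm := by
  simp [spectralSum, IsSymm, transpose_sum, transpose_smul, transpose_vecMulVec]

lemma spectralSum_eq_mul [Fintype n] (c : EuclideanSpace ℝ ι) (u : ι → EuclideanSpace ℝ n) :
    spectralSum c u = (of fun p i => c i * u i p) * of fun i q => u i q := by
  ext p q
  simp [spectralSum, mul_apply, Matrix.sum_apply, vecMulVec_apply, mul_assoc]

lemma rank_spectralSum_le [Fintype n] (c : EuclideanSpace ℝ ι) (u : ι → EuclideanSpace ℝ n) :
    (spectralSum c u).rank ≤ Fintype.card ι := by
  rw [spectralSum_eq_mul]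
  exact (rank_mul_le_right _ _).trans (rank_le_card_height _)

lemma Matrix.IsHermitian.eq_spectralSum [Fintype n] [DecidableEq n] {A : Matrix n n ℝ}
    (hA : A.IsHermitian) :
    A = spectralSum (WithLp.toLp 2 hA.eigenvalues) hA.eigenvectorBasis := by
  conv_lhs => rw [hA.spectral_theorem]
  ext p q
  simp only [RCLike.ofReal_real_eq_id, CompTriple.comp_eq, Unitary.conjStarAlgAut_apply,
    mul_apply, eigenvectorUnitary_apply, diagonal_apply, mul_ite, mul_zero, Finset.sum_ite_eq',
    Finset.mem_univ, ↓reduceIte, star_apply, star_trivial, spectralSum, Matrix.sum_apply,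
    smul_apply, vecMulVec_apply, smul_eq_mul]
  exact Finset.sum_congr rfl fun k _ => by ring
end

lemma Matrix.IsSymm.exists_eq_spectralSum {n : Type*} [Fintype n] [DecidableEq n]
    {A : Matrix n n ℝ} (hA : A.IsSymm) {r : ℕ} (hrk : A.rank ≤ r) (hr : r ≤ Fintype.card n) :
    ∃ (c : EuclideanSpace ℝ (Fin r)) (u : Fin r → EuclideanSpace ℝ n),
      Orthonormal ℝ u ∧ A = spectralSum c u := by
  have hH : A.IsHermitian := isHermitian_iff_isSymm.mpr hA
  set μ := hH.eigenvalues
  set b := hH.eigenvectorBasis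
  have hsupp : (Finset.univ.filter (μ · ≠ 0)).card ≤ r := by
    rwa [← Fintype.card_subtype, ← hH.rank_eq_card_non_zero_eigs]
  obtain ⟨s, hs, hcard⟩ := Finset.exists_superset_card_eq hsupp (by simpa using hr)
  set e : Fin r ≃ s := (Fintype.equivFinOfCardEq (by simpa using hcard)).symm
  have he : Function.Injective fun i => (e i : n) := Subtype.val_injective.comp e.injective
  refine ⟨WithLp.toLp 2 fun i => μ (e i), fun i => b (e i), b.orthonormal.comp _ he, ?_⟩
  have hzero : ∀ k ∈ Finset.univ, k ∉ s → μ k • vecMulVec ⇑(b k) ⇑(b k) = 0 := by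
    intro k _ hk
    rw [show μ k = 0 by by_contra h; exact hk (hs (by simpa using h)), zero_smul]
  calc A = ∑ k, μ k • vecMulVec ⇑(b k) ⇑(b k) := hH.eq_spectralSum
    _ = ∑ k ∈ s, μ k • vecMulVec ⇑(b k) ⇑(b k) :=
      (Finset.sum_subset (Finset.subset_univ s) hzero).symm
    _ = ∑ k : s, μ k • vecMulVec ⇑(b k) ⇑(b k) := (Finset.sum_coe_sort s _).symm
    _ = _ := (e.sum_comp fun k : s => μ k • vecMulVec ⇑(b k) ⇑(b k)).symm

section
variable {ι m n : Type*} [Fintype ι] [Fintype m] [Fintype n]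

lemma Matrix.frobenius_norm_sum_vecMulVec_smul_le {v : ι → EuclideanSpace ℝ n}
    (hv : Orthonormal ℝ v) (c : EuclideanSpace ℝ ι) {w : ι → EuclideanSpace ℝ m} {δ : ℝ}
    (hδ : 0 ≤ δ) (hw : ∀ i, ‖w i‖ ≤ δ) :
    ‖∑ i, vecMulVec ⇑(c i • w i) ⇑(v i)‖ ≤ δ * ‖c‖ := by
  refine (pow_le_pow_iff_left₀ (norm_nonneg _) (by positivity) two_ne_zero).mp ?_
  calc ‖∑ i, vecMulVec ⇑(c i • w i) ⇑(v i)‖ ^ 2 = ∑ i, c i ^ 2 * ‖w i‖ ^ 2 := by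
        rw [frobenius_norm_sq_sum_vecMulVec hv]
        simp [norm_smul, mul_pow]
    _ ≤ ∑ i, c i ^ 2 * δ ^ 2 := by gcongr with i; exact hw i
    _ = (δ * ‖c‖) ^ 2 := by
        rw [mul_pow, EuclideanSpace.norm_sq_eq, Finset.mul_sum]
        simp [mul_comm]

lemma norm_spectralSum {u : ι → EuclideanSpace ℝ n} (hu : Orthonormal ℝ u)
    (c : EuclideanSpace ℝ ι) : ‖spectralSum c u‖ = ‖c‖ := by
  have h : ‖spectralSum c u‖ ^ 2 = ‖c‖ ^ 2 := by
    simp [spectralSum, ← smul_vecMulVec, frobenius_norm_sq_sum_vecMulVec hu, norm_smul,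
      hu.1, EuclideanSpace.norm_sq_eq]
  exact (pow_left_inj₀ (norm_nonneg _) (norm_nonneg _) two_ne_zero).mp h

lemma norm_spectralSum_sub_le {u g : ι → EuclideanSpace ℝ n} (hu : Orthonormal ℝ u)
    (hg : Orthonormal ℝ g) (c c' : EuclideanSpace ℝ ι) {δ : ℝ} (hδ : 0 ≤ δ)
    (hug : ∀ i, ‖u i - g i‖ ≤ δ) :
    ‖spectralSum c u - spectralSum c' g‖ ≤ ‖c - c'‖ + 2 * δ * ‖c'‖ := by
  have hsplit : spectralSum c u - spectralSum c' g =
      ∑ i, vecMulVec ⇑((c - c') i • u i) ⇑(u i) +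
      ∑ i, vecMulVec ⇑(c' i • (u i - g i)) ⇑(u i) +
      (∑ i, vecMulVec ⇑(c' i • (u i - g i)) ⇑(g i))ᵀ := by
    ext p q
    simp only [spectralSum, Matrix.sub_apply, Matrix.sum_apply, Matrix.smul_apply,
      vecMulVec_apply, smul_eq_mul, ← Finset.sum_sub_distrib, PiLp.sub_apply, WithLp.ofLp_smul,
      smul_vecMulVec, WithLp.ofLp_sub, ← Finset.sum_add_distrib, Matrix.add_apply, Pi.sub_apply,
      transpose_apply]
    exact Finset.sum_congr rfl fun i _ => by ring
  rw [hsplit]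
  calc _ ≤ _ := norm_add₃_le
    _ ≤ 1 * ‖c - c'‖ + δ * ‖c'‖ + δ * ‖c'‖ := by
        rw [frobenius_norm_transpose]
        gcongr
        · exact frobenius_norm_sum_vecMulVec_smul_le hu _ zero_le_one fun i => (hu.1 i).le
        · exact frobenius_norm_sum_vecMulVec_smul_le hu _ hδ hug
        · exact frobenius_norm_sum_vecMulVec_smul_le hg _ hδ hug
    _ = ‖c - c'‖ + 2 * δ * ‖c'‖ := by ring

lemma exists_spectralSum_near {δ : ℝ≥0} {C : Set (EuclideanSpace ℝ ι)}
    {G : Set (ι → EuclideanSpace ℝ n)} (hCS : C ⊆ sphere 0 1) (hC : IsCover δ (sphere 0 1) C)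
    (hGF : ∀ g ∈ G, Orthonormal ℝ g) (hG : IsCover δ {u | Orthonormal ℝ u} G)
    {c : EuclideanSpace ℝ ι} (hc : ‖c‖ = 1) {u : ι → EuclideanSpace ℝ n} (hu : Orthonormal ℝ u) :
    ∃ c' ∈ C, ∃ g ∈ G, ‖spectralSum c u - spectralSum c' g‖ ≤ 3 * δ := by
  obtain ⟨c', hc'C, hcc'⟩ := hC.exists_dist_le (mem_sphere_zero_iff_norm.mpr hc)
  obtain ⟨g, hgG, hug⟩ := hG.exists_dist_le (show Orthonormal ℝ u from hu)
  refine ⟨c', hc'C, g, hgG, ?_⟩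
  have hc'1 : ‖c'‖ = 1 := by simpa using hCS hc'C
  calc _ ≤ ‖c - c'‖ + 2 * δ * ‖c'‖ :=
        norm_spectralSum_sub_le hu (hGF g hgG) c c' δ.coe_nonneg fun i => by
          simpa [dist_eq_norm] using (dist_le_pi_dist u g i).trans hug
    _ ≤ δ + 2 * δ * 1 := by
        rw [hc'1]
        gcongr
        simpa [dist_eq_norm] using hcc'
    _ = 3 * δ := by ring
end

section Nets
variable {E : Type*} [NormedAddCommGroup E] [InnerProductSpace ℝ E] [FiniteDimensional ℝ E]

lemma exists_finset_isCover_sphere {δ : ℝ≥0} (hδ : 0 < δ) :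
    ∃ N : Finset E, ↑N ⊆ sphere (0 : E) 1 ∧ (N.card : ℝ) ≤ (1 + 2 / (δ : ℝ)) ^ finrank ℝ E ∧
      IsCover δ (sphere 0 1) (N : Set E) := by
  obtain ⟨N, hNS, hcard, hcover⟩ := exists_finset_isCover_of_coveringNumber_le
    ((coveringNumber_le_packingNumber _ _).trans
      (packingNumber_le_of_subset_closedBall hδ (sphere_subset_closedBall (x := (0 : E)))))
  exact ⟨N, hNS, (Nat.cast_le.mpr hcard).trans (Nat.floor_le (by positivity)), hcover⟩

/-- The net has to consist of orthonormal frames itself, which costs a factor `2` in the radius. -/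
lemma exists_finset_isCover_orthonormal (ι : Type*) [Fintype ι] [DecidableEq ι] {δ : ℝ≥0}
    (hδ : 0 < δ) :
    ∃ G : Finset (ι → E), (∀ g ∈ G, Orthonormal ℝ g) ∧
      (G.card : ℝ) ≤ (1 + 2 / (δ : ℝ)) ^ (finrank ℝ E * Fintype.card ι) ∧
      IsCover (2 * δ) {u : ι → E | Orthonormal ℝ u} (G : Set (ι → E)) := by
  obtain ⟨N, -, hNcard, hNcover⟩ := exists_finset_isCover_sphere (E := E) hδ
  obtain ⟨G, hGF, hGcard, hGcover⟩ := exists_finset_isCover_of_coveringNumber_le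
    ((coveringNumber_two_mul_le_externalCoveringNumber _ _).trans
      (externalCoveringNumber_orthonormal_le (ι := ι) hNcover))
  refine ⟨G, fun g hg => hGF hg, ?_, hGcover⟩
  calc (G.card : ℝ) ≤ (N.card : ℝ) ^ Fintype.card ι := by exact_mod_cast hGcard
    _ ≤ ((1 + 2 / (δ : ℝ)) ^ finrank ℝ E) ^ Fintype.card ι := by gcongr
    _ = _ := by rw [← pow_mul]

end Nets

lemma exists_net_isSymm_rank_le {n : Type*} [Fintype n] [DecidableEq n] {r : ℕ}
    (hr : r ≤ Fintype.card n) {ε : ℝ} (hε : 0 < ε) :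
    ∃ N : Finset (Matrix n n ℝ), (∀ Y ∈ N, Y.IsSymm ∧ ‖Y‖ = 1 ∧ Y.rank ≤ r) ∧
      (N.card : ℝ) ≤ (1 + 6 / ε) ^ ((2 * Fintype.card n + 1) * r) ∧
      ∀ X : Matrix n n ℝ, X.IsSymm → ‖X‖ = 1 → X.rank ≤ r → ∃ Y ∈ N, ‖X - Y‖ ≤ ε := by
  set δ : ℝ≥0 := ⟨ε / 6, by positivity⟩
  have hδε : (δ : ℝ) = ε / 6 := rfl
  have hδ : 0 < δ := NNReal.coe_pos.mp (by positivity : (0 : ℝ) < ε / 6)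
  obtain ⟨C, hCS, hCcard, hCcover⟩ :=
    exists_finset_isCover_sphere (E := EuclideanSpace ℝ (Fin r)) (mul_pos two_pos hδ)
  obtain ⟨G, hGF, hGcard, hGcover⟩ :=
    exists_finset_isCover_orthonormal (E := EuclideanSpace ℝ n) (Fin r) hδ
  refine ⟨(C ×ˢ G).image fun p => spectralSum p.1 p.2, ?_, ?_, ?_⟩
  · simp only [Finset.mem_image, Finset.mem_product, Prod.exists]
    rintro _ ⟨c, g, ⟨hc, hg⟩, rfl⟩
    refine ⟨isSymm_spectralSum c g, ?_, by simpa using rank_spectralSum_le c g⟩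
    rw [norm_spectralSum (hGF g hg)]
    simpa using hCS hc
  · have hC : (C.card : ℝ) ≤ (1 + 6 / ε) ^ r := by
      convert hCcard using 2
      · push_cast; rw [hδε]; field_simp
      · simp
    have hG : (G.card : ℝ) ≤ (1 + 6 / ε) ^ (2 * Fintype.card n * r) := by
      refine hGcard.trans ?_
      simp only [finrank_euclideanSpace, Fintype.card_fin, mul_assoc, pow_mul]
      gcongr
      calc 1 + 2 / (δ : ℝ) = 1 + 2 * (6 / ε) := by rw [hδε]; field_simp
        _ ≤ (1 + 6 / ε) ^ 2 := by nlinarith [sq_nonneg (6 / ε)]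
    calc (((C ×ˢ G).image fun p => spectralSum p.1 p.2).card : ℝ) ≤ C.card * G.card := by
          exact_mod_cast Finset.card_image_le.trans (Finset.card_product C G).le
      _ ≤ (1 + 6 / ε) ^ r * (1 + 6 / ε) ^ (2 * Fintype.card n * r) := by gcongr
      _ = (1 + 6 / ε) ^ ((2 * Fintype.card n + 1) * r) := by ring
  · intro X hXs hXn hXr
    obtain ⟨c, u, hu, rfl⟩ := hXs.exists_eq_spectralSum hXr hr
    obtain ⟨c', hc'C, g, hgG, hnear⟩ :=
      exists_spectralSum_near hCS hCcover hGF hGcover (by rwa [norm_spectralSum hu] at hXn) hu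
    refine ⟨spectralSum c' g,
      Finset.mem_image.mpr ⟨(c', g), Finset.mem_product.mpr ⟨hc'C, hgG⟩, rfl⟩, ?_⟩
    calc _ ≤ 3 * (2 * δ : ℝ) := by exact_mod_cast hnear
      _ = ε := by rw [hδε]; ring

theorem statement17 {d r : ℕ} (ε : ℝ) (hε : 0 < ε) :
    ∃ N : Finset (Matrix (Fin d) (Fin d) ℝ),
      (∀ Y ∈ N, Y.IsSymm ∧ frobNorm Y = 1 ∧ Y.rank ≤ r) ∧
      (N.card : ℝ) ≤ (1 + 6 / ε) ^ ((2 * d + 1) * r) ∧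
      ∀ X : Matrix (Fin d) (Fin d) ℝ, X.IsSymm → frobNorm X = 1 → X.rank ≤ r →
        ∃ Y ∈ N, frobNorm (X - Y) ≤ ε := by
  obtain ⟨N, hN, hcard, hcover⟩ :=
    exists_net_isSymm_rank_le (n := Fin d) (r := min r d) (by simp) hε
  have hrank (Y : Matrix (Fin d) (Fin d) ℝ) : Y.rank ≤ min r d ↔ Y.rank ≤ r := by
    simp [Y.rank_le_width]
  refine ⟨N, fun Y hY => ?_, ?_, fun X hXs hXn hXr => ?_⟩
  · obtain ⟨hs, hn, hr⟩ := hN Y hY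
    exact ⟨hs, by rwa [frobNorm_eq_norm], (hrank Y).mp hr⟩
  · refine hcard.trans (pow_le_pow_right₀ ?_ ?_)
    · linarith [div_pos (by norm_num : (0 : ℝ) < 6) hε]
    · rw [Fintype.card_fin]
      exact Nat.mul_le_mul_left _ (min_le_left r d)
  · obtain ⟨Y, hY, hXY⟩ := hcover X hXs (by rwa [← frobNorm_eq_norm]) ((hrank X).mpr hXr)
    exact ⟨Y, hY, by rwa [frobNorm_eq_norm]⟩
end
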